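/- Let H be an undirected graph and let H' be obtained from H by contracting a single edge. Then dtd(H') ≤ dtd(H), where dtd of an undirected graph is the maximum DAG treedepth over all acyclic orientations. -/

import Mathlib

open Set

namespace DagPaper

variable {V : Type*}

/-- Adjacency of a digraph restricted to a vertex set `A`. -/
def restrAdj (Adj : V → V → Prop) (A : Set V) : V → V → Prop :=
  fun u v => u ∈ A ∧ v ∈ A ∧ Adj u v

/-- Underlying undirected (symmetrized) adjacency restricted to `A`. -/
def symAdj (Adj : V → V → Prop) (A : Set V) : V → V → Prop :=
  fun u v => restrAdj Adj A u v ∨ restrAdj Adj A v u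

/-- `v` is a source (indegree zero) of the sub-DAG induced on `A`. -/
def IsSource (Adj : V → V → Prop) (A : Set V) (v : V) : Prop :=
  v ∈ A ∧ ∀ u ∈ A, ¬ Adj u v

/-- Vertices reachable from `s` by directed paths inside `A` (including `s`). -/
def Reach (Adj : V → V → Prop) (A : Set V) (s : V) : Set V :=
  {v | Relation.ReflTransGen (restrAdj Adj A) s v}

/-- Vertices reachable from a set of vertices `S` inside `A`. -/
def ReachSet (Adj : V → V → Prop) (A : Set V) (S : Set V) : Set V :=
  ⋃ s ∈ S, Reach Adj A s

/-- Connected component of `v` in the underlying undirected graph induced on `A`. -/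
def Comp (Adj : V → V → Prop) (A : Set V) (v : V) : Set V :=
  {u | Relation.ReflTransGen (symAdj Adj A) v u}

/-- The digraph `Adj` is acyclic. -/
def Acyclic (Adj : V → V → Prop) : Prop := ∀ v, ¬ Relation.TransGen Adj v v

/-- `dtdLE Adj A n`: the sub-DAG induced on `A` admits a DAG elimination forest of
depth at most `n`: each connected component is emptied by repeatedly choosing a
source `s` and deleting `s` together with all vertices reachable from it. -/
inductive dtdLE (Adj : V → V → Prop) : Set V → ℕ → Prop where
  | empty (n : ℕ) : dtdLE Adj ∅ n
  | step (A : Set V) (n : ℕ) (s : V → V)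
      (hs : ∀ v ∈ A, IsSource Adj (Comp Adj A v) (s v))
      (h : ∀ v ∈ A, dtdLE Adj (Comp Adj A v \ Reach Adj (Comp Adj A v) (s v)) n) :
      dtdLE Adj A (n + 1)

/-- DAG treedepth of a DAG: minimum depth of a DAG elimination forest. -/
noncomputable def dtd (Adj : V → V → Prop) : ℕ := sInf {n | dtdLE Adj Set.univ n}

/-- `IsEF Adj A anc n`: there is a DAG elimination forest for the sub-DAG on `A`,
of depth at most `n`, whose ancestor relation is contained in `anc`: whenever a
source `s` is chosen as a root of a component, `anc s u` holds for every vertex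
`u` remaining below it. -/
inductive IsEF (Adj : V → V → Prop) : Set V → (V → V → Prop) → ℕ → Prop where
  | empty (anc : V → V → Prop) (n : ℕ) : IsEF Adj ∅ anc n
  | step (A : Set V) (anc : V → V → Prop) (n : ℕ) (s : V → V)
      (hs : ∀ v ∈ A, IsSource Adj (Comp Adj A v) (s v))
      (hanc : ∀ v ∈ A, ∀ u ∈ Comp Adj A v \ Reach Adj (Comp Adj A v) (s v), anc (s v) u)
      (h : ∀ v ∈ A, IsEF Adj (Comp Adj A v \ Reach Adj (Comp Adj A v) (s v)) anc n) :
      IsEF Adj A anc (n + 1)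

/-- `Adj` is an acyclic orientation of the undirected simple graph `G`. -/
structure IsAcyclicOrientation (G : SimpleGraph V) (Adj : V → V → Prop) : Prop where
  subset : ∀ u v, Adj u v → G.Adj u v
  covers : ∀ u v, G.Adj u v → Adj u v ∨ Adj v u
  antisymm : ∀ u v, Adj u v → ¬ Adj v u
  acyclic : Acyclic Adj

/-- `tdLE G A n`: the subgraph of `G` induced on `A` admits an elimination forest of
depth at most `n` (classical treedepth). -/
inductive tdLE (G : SimpleGraph V) : Set V → ℕ → Prop where
  | empty (n : ℕ) : tdLE G ∅ n
  | step (A : Set V) (n : ℕ) (r : V → V)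
      (hr : ∀ v ∈ A, r v ∈ Comp G.Adj A v)
      (h : ∀ v ∈ A, tdLE G (Comp G.Adj A v \ {r v}) n) :
      tdLE G A (n + 1)

/-- Treedepth of an undirected graph. -/
noncomputable def td (G : SimpleGraph V) : ℕ := sInf {n | tdLE G Set.univ n}

/-- `I` is a minor of `H`, via branch sets. -/
def IsMinor {W : Type*} (I : SimpleGraph W) (H : SimpleGraph V) : Prop :=
  ∃ B : W → Set V, (∀ a, (B a).Nonempty) ∧
    (∀ a, ∀ x ∈ B a, ∀ y ∈ B a,
      Relation.ReflTransGen (fun p q => p ∈ B a ∧ q ∈ B a ∧ H.Adj p q) x y) ∧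
    (∀ a b, a ≠ b → Disjoint (B a) (B b)) ∧
    (∀ a b, I.Adj a b → ∃ x ∈ B a, ∃ y ∈ B b, H.Adj x y)

/-- `I` is an induced minor of `H` (vertex deletions and edge contractions),
via branch sets. -/
def IsInducedMinor {W : Type*} (I : SimpleGraph W) (H : SimpleGraph V) : Prop :=
  ∃ B : W → Set V, (∀ a, (B a).Nonempty) ∧
    (∀ a, ∀ x ∈ B a, ∀ y ∈ B a,
      Relation.ReflTransGen (fun p q => p ∈ B a ∧ q ∈ B a ∧ H.Adj p q) x y) ∧
    (∀ a b, a ≠ b → Disjoint (B a) (B b)) ∧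
    (∀ a b, a ≠ b → (I.Adj a b ↔ ∃ x ∈ B a, ∃ y ∈ B b, H.Adj x y))

/-- `G'` is obtained from `G` by contracting the single edge `{u, v}`, with
quotient map `f`. -/
def IsEdgeContraction {W : Type*} (G : SimpleGraph V) (G' : SimpleGraph W)
    (f : V → W) (u v : V) : Prop :=
  G.Adj u v ∧ f u = f v ∧ Function.Surjective f ∧
  (∀ x y, f x = f y → x ≠ y → (x = u ∧ y = v) ∨ (x = v ∧ y = u)) ∧
  (∀ a b, G'.Adj a b ↔ a ≠ b ∧ ∃ x y, f x = a ∧ f y = b ∧ G.Adj x y)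

/-- `k` lies on the (unique, in a tree) path between `i` and `j`:
every walk from `i` to `j` passes through `k`. -/
def OnPath {ι : Type*} (T : SimpleGraph ι) (i k j : ι) : Prop :=
  ∀ p : T.Walk i j, k ∈ p.support

/-- A DAG tree decomposition of the DAG `Adj` (Bressan). -/
structure DagTreeDecomp (Adj : V → V → Prop) (ι : Type*) where
  tree : SimpleGraph ι
  conn : tree.Connected
  acyc : tree.IsAcyclic
  bags : ι → Set V
  bags_sources : ∀ i, ∀ v ∈ bags i, IsSource Adj Set.univ v
  cover : ∀ v, IsSource Adj Set.univ v → ∃ i, v ∈ bags i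
  reach : ∀ i k j, OnPath tree i k j →
    ReachSet Adj Set.univ (bags i) ∩ ReachSet Adj Set.univ (bags j)
      ⊆ ReachSet Adj Set.univ (bags k)

/-- The DAG has a DAG tree decomposition of width (max bag size) at most `w`. -/
def dtwLE (Adj : V → V → Prop) (w : ℕ) : Prop :=
  ∃ (ι : Type) (D : DagTreeDecomp Adj ι), ∀ i, (D.bags i).ncard ≤ w

/-- DAG treewidth of a DAG. -/
noncomputable def dtw (Adj : V → V → Prop) : ℕ := sInf {w | dtwLE Adj w}

/-- A tree decomposition of an undirected graph. -/
structure TreeDecomp (G : SimpleGraph V) (ι : Type*) where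
  tree : SimpleGraph ι
  conn : tree.Connected
  acyc : tree.IsAcyclic
  bags : ι → Set V
  vcover : ∀ v, ∃ i, v ∈ bags i
  ecover : ∀ u v, G.Adj u v → ∃ i, u ∈ bags i ∧ v ∈ bags i
  vconn : ∀ v i k j, v ∈ bags i → v ∈ bags j → OnPath tree i k j → v ∈ bags k

/-- `G` has a tree decomposition of width at most `w` (bags of size ≤ w + 1). -/
def twLE (G : SimpleGraph V) (w : ℕ) : Prop :=
  ∃ (ι : Type) (D : TreeDecomp G ι), ∀ i, (D.bags i).ncard ≤ w + 1

/-- Treewidth of an undirected graph. -/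
noncomputable def tw (G : SimpleGraph V) : ℕ := sInf {w | twLE G w}

/-- A generalized hypertree decomposition of the hypergraph with hyperedge set `E`. -/
structure GHD {Vh : Type*} (E : Set (Set Vh)) (ι : Type*) where
  tree : SimpleGraph ι
  conn : tree.Connected
  acyc : tree.IsAcyclic
  vbags : ι → Set Vh
  ecov : ι → Set (Set Vh)
  ecov_mem : ∀ i, ecov i ⊆ E
  edge_cover : ∀ e ∈ E, ∃ i, e ⊆ vbags i
  vconn : ∀ v i k j, v ∈ vbags i → v ∈ vbags j → OnPath tree i k j → v ∈ vbags k
  guard : ∀ i, vbags i ⊆ ⋃ e ∈ ecov i, e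

/-- The hypergraph has a generalized hypertree decomposition of width at most `w`. -/
def ghwLE {Vh : Type*} (E : Set (Set Vh)) (w : ℕ) : Prop :=
  ∃ (ι : Type) (D : GHD E ι), ∀ i, (D.ecov i).ncard ≤ w

/-- Generalized hypertree width. -/
noncomputable def ghw {Vh : Type*} (E : Set (Set Vh)) : ℕ := sInf {w | ghwLE E w}

set_option linter.unusedVariables false
set_option linter.unusedSectionVars false
section Generic

variable {V : Type*} {D : V → V → Prop}

lemma symAdj_symm {A : Set V} {x y : V} (h : symAdj D A x y) : symAdj D A y x := h.symm

lemma symAdj_symmetric (A : Set V) : Symmetric (symAdj D A) := fun _ _ h => h.symm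

lemma symAdj.mem_left {A : Set V} {x y : V} (h : symAdj D A x y) : x ∈ A := by
  rcases h with ⟨h1,_,_⟩|⟨_,h2,_⟩ <;> assumption

lemma symAdj.mem_right {A : Set V} {x y : V} (h : symAdj D A x y) : y ∈ A := by
  rcases h with ⟨_,h2,_⟩|⟨h1,_,_⟩ <;> assumption

lemma symAdj_of_adj {A : Set V} {x y : V} (hx : x ∈ A) (hy : y ∈ A) (h : D x y) :
    symAdj D A x y := Or.inl ⟨hx, hy, h⟩

lemma symAdj_mono {A B : Set V} (hAB : A ⊆ B) {x y : V} (h : symAdj D A x y) :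
    symAdj D B x y := by
  rcases h with ⟨h1,h2,h3⟩|⟨h1,h2,h3⟩
  · exact Or.inl ⟨hAB h1, hAB h2, h3⟩
  · exact Or.inr ⟨hAB h1, hAB h2, h3⟩

lemma mem_comp_self (A : Set V) (x : V) : x ∈ Comp D A x := Relation.ReflTransGen.refl

lemma comp_subset {A : Set V} {x : V} (hx : x ∈ A) : Comp D A x ⊆ A := by
  intro y hy
  induction hy with
  | refl => exact hx
  | tail _ h ih => exact h.mem_right

lemma comp_mono {A B : Set V} (hAB : A ⊆ B) (x : V) : Comp D A x ⊆ Comp D B x := by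
  intro y hy
  exact Relation.ReflTransGen.mono (fun a b h => symAdj_mono hAB h) _ _ hy

lemma comp_eq_of_mem {A : Set V} {x y : V} (h : y ∈ Comp D A x) :
    Comp D A x = Comp D A y := by
  ext z
  constructor
  · intro hz
    exact Relation.ReflTransGen.trans (by haveI : Std.Symm (symAdj D A) := ⟨fun _ _ hh => symAdj_symmetric A hh⟩; exact Std.Symm.symm (r := Relation.ReflTransGen (symAdj D A)) _ _ h) hz
  · intro hz
    exact Relation.ReflTransGen.trans h hz

lemma mem_comp_of_symAdj {A : Set V} {x y : V} (hx : x ∈ Comp D A x) (h : symAdj D A x y) :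
    y ∈ Comp D A x := Relation.ReflTransGen.tail (mem_comp_self A x) h

lemma mem_comp_comm {A : Set V} {x y : V} (h : y ∈ Comp D A x) : x ∈ Comp D A y :=
  by haveI : Std.Symm (symAdj D A) := ⟨fun _ _ hh => symAdj_symmetric A hh⟩; exact Std.Symm.symm (r := Relation.ReflTransGen (symAdj D A)) _ _ h

/-- If `X` is sandwiched: `Comp D A x ⊆ X ⊆ A`, then components agree. -/
lemma comp_restrict {A X : Set V} {x : V} (hXA : X ⊆ A) (hCX : Comp D A x ⊆ X) :
    Comp D X x = Comp D A x := by
  apply Set.Subset.antisymm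
  · exact comp_mono hXA x
  · intro y hy
    induction hy with
    | refl => exact mem_comp_self X x
    | @tail b c hb hbc ih =>
      refine Relation.ReflTransGen.tail ih ?_
      have hbX : b ∈ X := hCX hb
      have hcX : c ∈ X := hCX (Relation.ReflTransGen.tail hb hbc)
      rcases hbc with ⟨h1,h2,h3⟩|⟨h1,h2,h3⟩
      · exact Or.inl ⟨hbX, hcX, h3⟩
      · exact Or.inr ⟨hcX, hbX, h3⟩

lemma mem_reach_self (A : Set V) (s : V) : s ∈ Reach D A s := Relation.ReflTransGen.refl

lemma reach_subset {A : Set V} {s : V} (hs : s ∈ A) : Reach D A s ⊆ A := by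
  intro y hy
  induction hy with
  | refl => exact hs
  | tail _ h ih => exact h.2.1

lemma reach_mono_dom {A B : Set V} (hAB : A ⊆ B) (s : V) : Reach D A s ⊆ Reach D B s := by
  intro y hy
  exact Relation.ReflTransGen.mono (fun a b ⟨h1,h2,h3⟩ => ⟨hAB h1, hAB h2, h3⟩) _ _ hy

lemma reach_tail {A : Set V} {s x y : V} (hx : x ∈ Reach D A s) (h1 : x ∈ A) (h2 : y ∈ A)
    (h3 : D x y) : y ∈ Reach D A s := Relation.ReflTransGen.tail hx ⟨h1, h2, h3⟩

lemma reach_trans {A : Set V} {s t : V} (h : t ∈ Reach D A s) :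
    Reach D A t ⊆ Reach D A s := fun _ hy => Relation.ReflTransGen.trans h hy

lemma reach_subset_comp {A : Set V} {s : V} : Reach D A s ⊆ Comp D A s := by
  intro y hy
  exact Relation.ReflTransGen.mono (fun a b h => Or.inl h) _ _ hy

/-- Reachability inside a component is the same as inside the whole set. -/
lemma reach_comp_eq {A : Set V} {s : V} (hs : s ∈ A) :
    Reach D (Comp D A s) s = Reach D A s := by
  apply Set.Subset.antisymm
  · exact reach_mono_dom (comp_subset hs) s
  · intro y hy
    induction hy with
    | refl => exact mem_reach_self _ s
    | @tail b c hb hbc ih =>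
      have hbC : b ∈ Comp D A s := reach_subset_comp hb
      have hcC : c ∈ Comp D A s :=
        Relation.ReflTransGen.tail hbC (Or.inl hbc)
      exact Relation.ReflTransGen.tail ih ⟨hbC, hcC, hbc.2.2⟩

/-- Reach from `s` computed in `Comp D A x` when `s` is in that component. -/
lemma reach_in_comp_eq {A : Set V} {x s : V} (hx : x ∈ A) (hs : s ∈ Comp D A x) :
    Reach D (Comp D A x) s = Reach D A s := by
  rw [comp_eq_of_mem hs, reach_comp_eq (comp_subset hx hs)]

lemma dtdLE_mono {A : Set V} : ∀ {n m : ℕ}, dtdLE D A n → n ≤ m → dtdLE D A m := by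
  have succ : ∀ {n : ℕ} {A : Set V}, dtdLE D A n → dtdLE D A (n+1) := by
    intro n A h
    induction h with
    | empty n => exact dtdLE.empty _
    | step A n s hs h ih => exact dtdLE.step A (n+1) s hs (fun v hv => ih v hv)
  intro n m h hnm
  induction hnm with
  | refl => exact h
  | step _ ih => exact succ ih

lemma dtdLE_inversion {A : Set V} {n : ℕ} (h : dtdLE D A n) {x : V} (hx : x ∈ A) :
    ∃ m t, n = m + 1 ∧ IsSource D (Comp D A x) t ∧
      dtdLE D (Comp D A x \ Reach D (Comp D A x) t) m := by
  cases h with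
  | empty n => exact absurd hx (Set.notMem_empty x)
  | step A n s hs h => exact ⟨n, s x, rfl, hs x hx, h x hx⟩

lemma dtdLE_step' {A : Set V} {n : ℕ}
    (h : ∀ x ∈ A, ∃ t, IsSource D (Comp D A x) t ∧
      dtdLE D (Comp D A x \ Reach D (Comp D A x) t) n) :
    dtdLE D A (n + 1) := by
  classical
  refine dtdLE.step A n (fun x => if hx : x ∈ A then (h x hx).choose else x) ?_ ?_
  · intro x hx
    simp only [dif_pos hx]
    exact (h x hx).choose_spec.1
  · intro x hx
    simp only [dif_pos hx]
    exact (h x hx).choose_spec.2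

/-- A union of components of `B` inherits the bound. -/
lemma dtdLE_compUnion {B X : Set V} {n : ℕ} (h : dtdLE D B n) (hXB : X ⊆ B)
    (hcl : ∀ b ∈ X, Comp D B b ⊆ X) : dtdLE D X n := by
  cases h with
  | empty n =>
    have : X = ∅ := Set.subset_empty_iff.mp hXB
    rw [this]; exact dtdLE.empty _
  | step B n s hs h =>
    refine dtdLE.step X n s ?_ ?_
    · intro x hx
      rw [comp_restrict hXB (hcl x hx)]
      exact hs x (hXB hx)
    · intro x hx
      rw [comp_restrict hXB (hcl x hx)]
      exact h x (hXB hx)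

/-- Every element of a component in a union with no cross edges stays on its side. -/
lemma comp_union_subset {X Y : Set V}
    (hcross : ∀ x ∈ X, ∀ y ∈ Y, ¬ D x y ∧ ¬ D y x) {x : V} (hx : x ∈ X) :
    Comp D (X ∪ Y) x ⊆ X := by
  intro z hz
  induction hz with
  | refl => exact hx
  | @tail b c hb hbc ih =>
    rcases hbc with ⟨h1,h2,h3⟩|⟨h1,h2,h3⟩
    · rcases h2 with h2|h2
      · exact h2
      · exact absurd h3 ((hcross b ih c h2).1)
    · rcases h1 with h1|h1
      · exact h1
      · exact absurd h3 ((hcross b ih c h1).2)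

/-- Union of two mutually non-adjacent parts. -/
lemma dtdLE_union {X Y : Set V} {n : ℕ} (hX : dtdLE D X n) (hY : dtdLE D Y n)
    (hcross : ∀ x ∈ X, ∀ y ∈ Y, ¬ D x y ∧ ¬ D y x) : dtdLE D (X ∪ Y) n := by
  have hcross' : ∀ y ∈ Y, ∀ x ∈ X, ¬ D y x ∧ ¬ D x y := by
    intro y hy x hx; exact ⟨(hcross x hx y hy).2, (hcross x hx y hy).1⟩
  have hYX : Y ∪ X = X ∪ Y := Set.union_comm Y X
  match n with
  | 0 =>
    cases hX with
    | empty _ =>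
      cases hY with
      | empty _ => rw [Set.empty_union]; exact dtdLE.empty _
  | (m+1) =>
    apply dtdLE_step'
    intro x0 hx0
    rcases hx0 with hx0 | hx0
    · have hcomp : Comp D (X ∪ Y) x0 = Comp D X x0 :=
        (comp_restrict Set.subset_union_left (comp_union_subset hcross hx0)).symm
      obtain ⟨m', t, hm, hsrc, hrem⟩ := dtdLE_inversion hX hx0
      obtain rfl : m = m' := by omega
      rw [hcomp]
      exact ⟨t, hsrc, hrem⟩
    · have hcomp : Comp D (X ∪ Y) x0 = Comp D Y x0 := by
        rw [← hYX]
        exact (comp_restrict Set.subset_union_left (comp_union_subset hcross' hx0)).symm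
      obtain ⟨m', t, hm, hsrc, hrem⟩ := dtdLE_inversion hY hx0
      obtain rfl : m = m' := by omega
      rw [hcomp]
      exact ⟨t, hsrc, hrem⟩

end Generic
section Generic2

variable {V : Type*} {D : V → V → Prop}

/-- Deleting a set closed under out-edges does not increase the DAG treedepth. -/
lemma dtdLE_removeOut : ∀ {A : Set V} {n : ℕ}, dtdLE D A n →
    ∀ R : Set V, (∀ x ∈ R, ∀ y ∈ A, D x y → y ∈ R) → dtdLE D (A \ R) n := by
  intro A n h
  induction h with
  | empty n => intro R hR; rw [Set.empty_diff]; exact dtdLE.empty _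
  | @step A n s hs h IH =>
    intro R hR
    apply dtdLE_step'
    intro x0 hx0
    set A' := A \ R with hA'
    have hA'A : A' ⊆ A := Set.diff_subset
    have hx0A : x0 ∈ A := hA'A hx0
    set C := Comp D A x0 with hC
    set C'' := Comp D A' x0 with hC''
    have hC''C : C'' ⊆ C := comp_mono hA'A x0
    have hCA : C ⊆ A := comp_subset hx0A
    have hC''A' : C'' ⊆ A' := comp_subset hx0
    set s0 := s x0 with hs0def
    have hsrc := hs x0 hx0A
    have hrem := h x0 hx0A
    set T := C \ Reach D C s0 with hT
    by_cases hs0C'' : s0 ∈ C''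
    · -- the original source still works
      have key : ∀ x ∈ Reach D C s0, x ∈ Reach D C'' s0 ∨ x ∈ R := by
        intro x hx
        induction hx with
        | refl => exact Or.inl (mem_reach_self _ _)
        | @tail b c hb hbc ih =>
          rcases ih with ih | ih
          · by_cases hcR : c ∈ R
            · exact Or.inr hcR
            · left
              have hbA' : b ∈ A' := comp_subset hx0 (reach_subset hs0C'' ih)
              have hcA' : c ∈ A' := ⟨hCA hbc.2.1, hcR⟩
              have hbC'' : b ∈ C'' := reach_subset hs0C'' ih
              have hcC'' : c ∈ C'' := by
                have hmem : c ∈ Comp D A' b := Relation.ReflTransGen.tail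
                  (mem_comp_self _ _) (symAdj_of_adj hbA' hcA' hbc.2.2)
                rw [hC'', comp_eq_of_mem hbC'']
                exact hmem
              exact reach_tail ih hbC'' hcC'' hbc.2.2
          · exact Or.inr (hR b ih c (hCA hbc.2.1) hbc.2.2)
      set X := C'' \ Reach D C'' s0 with hX
      have hXT : X ⊆ T := by
        intro x hx
        refine ⟨hC''C hx.1, ?_⟩
        intro hxr
        rcases key x hxr with hk | hk
        · exact hx.2 hk
        · exact (hC''A' hx.1).2 hk
      have hR'out : ∀ y ∈ T \ X, ∀ z ∈ T, D y z → z ∈ T \ X := by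
        intro y hy z hz hyz
        refine ⟨hz, ?_⟩
        intro hzX
        have hyC'' : y ∉ C'' := by
          intro hyC''
          exact hy.2 ⟨hyC'', fun hr => hy.1.2 (reach_mono_dom hC''C s0 hr)⟩
        by_cases hyR : y ∈ R
        · exact (hC''A' hzX.1).2 (hR y hyR z (hCA hz.1) hyz)
        · have hyA' : y ∈ A' := ⟨hCA hy.1.1, hyR⟩
          have : y ∈ Comp D A' z := Relation.ReflTransGen.tail (mem_comp_self _ _)
            (Or.inr ⟨hyA', hC''A' hzX.1, hyz⟩)
          rw [comp_eq_of_mem (mem_comp_comm hzX.1 : x0 ∈ Comp D A' z)] at this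
          exact hyC'' (mem_comp_comm (mem_comp_comm this))
      refine ⟨s0, ⟨hs0C'', fun z hz => hsrc.2 z (hC''C hz)⟩, ?_⟩
      have heq : (T \ (T \ X)) = X := by
        rw [Set.diff_diff_right_self]
        exact Set.inter_eq_self_of_subset_right hXT
      have := IH x0 hx0A (T \ X) (fun y hy z hz hyz => hR'out y hy z hz hyz)
      rw [heq] at this
      exact this
    · -- the component avoids the reach of the original source entirely
      have hdisj : ∀ x ∈ Reach D C s0, x ∉ C'' := by
        by_cases hs0R : s0 ∈ R
        · have : ∀ x ∈ Reach D C s0, x ∈ R := by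
            intro x hx
            induction hx with
            | refl => exact hs0R
            | @tail b c hb hbc ih => exact hR b ih c (hCA hbc.2.1) hbc.2.2
          intro x hx hxC''
          exact (hC''A' hxC'').2 (this x hx)
        · have hs0A' : s0 ∈ A' := ⟨hCA hsrc.1, hs0R⟩
          have : ∀ x ∈ Reach D C s0, x ∈ R ∨ x ∈ Comp D A' s0 := by
            intro x hx
            induction hx with
            | refl => exact Or.inr (mem_comp_self _ _)
            | @tail b c hb hbc ih =>
              rcases ih with ih | ih
              · exact Or.inl (hR b ih c (hCA hbc.2.1) hbc.2.2)
              · by_cases hcR : c ∈ R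
                · exact Or.inl hcR
                · refine Or.inr (Relation.ReflTransGen.tail ih ?_)
                  exact symAdj_of_adj (comp_subset hs0A' ih) ⟨hCA hbc.2.1, hcR⟩ hbc.2.2
          intro x hx hxC''
          rcases this x hx with hk | hk
          · exact (hC''A' hxC'').2 hk
          · apply hs0C''
            have h1 : Comp D A' s0 = Comp D A' x := comp_eq_of_mem hk
            have h2 : Comp D A' x0 = Comp D A' x := comp_eq_of_mem hxC''
            rw [hC'', h2, ← h1]
            exact mem_comp_self _ _
      have hC''T : C'' ⊆ T := by
        intro x hx
        exact ⟨hC''C hx, fun hr => hdisj x hr hx⟩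
      have hR''out : ∀ y ∈ T \ C'', ∀ z ∈ T, D y z → z ∈ T \ C'' := by
        intro y hy z hz hyz
        refine ⟨hz, ?_⟩
        intro hzC''
        by_cases hyR : y ∈ R
        · exact (hC''A' hzC'').2 (hR y hyR z (hCA hz.1) hyz)
        · have hyA' : y ∈ A' := ⟨hCA hy.1.1, hyR⟩
          have : y ∈ Comp D A' z := Relation.ReflTransGen.tail (mem_comp_self _ _)
            (Or.inr ⟨hyA', hC''A' hzC'', hyz⟩)
          rw [comp_eq_of_mem (mem_comp_comm hzC'' : x0 ∈ Comp D A' z)] at this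
          exact hy.2 (mem_comp_comm (mem_comp_comm this))
      have hC''dtd : dtdLE D C'' n := by
        have heq : (T \ (T \ C'')) = C'' := by
          rw [Set.diff_diff_right_self]
          exact Set.inter_eq_self_of_subset_right hC''T
        have := IH x0 hx0A (T \ C'') (fun y hy z hz hyz => hR''out y hy z hz hyz)
        rw [heq] at this
        exact this
      obtain ⟨m, t, hm, hsrc', hrem'⟩ := dtdLE_inversion hC''dtd (mem_comp_self A' x0)
      have hcc : Comp D C'' x0 = C'' := comp_restrict hC''A' (fun y hy => hy)
      rw [hcc] at hsrc' hrem'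
      exact ⟨t, hsrc', dtdLE_mono hrem' (by omega)⟩

/-- From an elimination forest on an in-closed subset `X ⊆ C`, find a source of `C`
reaching a given element of `X`. -/
lemma dtdLE_back : ∀ {X : Set V} {n : ℕ}, dtdLE D X n →
    ∀ C : Set V, X ⊆ C → (∀ z ∈ C, ∀ x ∈ X, D z x → z ∈ X) →
    ∀ x1 ∈ X, ∃ t, t ∈ X ∧ IsSource D C t ∧ x1 ∈ Reach D C t := by
  intro X n h
  induction h with
  | empty n => intro C _ _ x1 hx1; exact absurd hx1 (Set.notMem_empty x1)
  | @step X n s hs h IH =>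
    intro C hXC hIn x1 hx1
    set K := Comp D X x1 with hK
    set t0 := s x1 with ht0
    have hsrc := hs x1 hx1
    have ht0X : t0 ∈ X := comp_subset hx1 hsrc.1
    have ht0src : IsSource D C t0 := by
      refine ⟨hXC ht0X, ?_⟩
      intro z hz hzadj
      have hzX : z ∈ X := hIn z hz t0 ht0X hzadj
      have hzK : z ∈ K := by
        have : z ∈ Comp D X t0 := Relation.ReflTransGen.tail (mem_comp_self _ _)
          (Or.inr ⟨hzX, ht0X, hzadj⟩)
        rw [← comp_eq_of_mem hsrc.1] at this
        exact this
      exact hsrc.2 z hzK hzadj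
    by_cases hreach : x1 ∈ Reach D K t0
    · refine ⟨t0, ht0X, ht0src, ?_⟩
      exact reach_mono_dom (fun y hy => hXC (comp_subset hx1 hy)) t0 hreach
    · have hx1' : x1 ∈ K \ Reach D K t0 := ⟨mem_comp_self _ _, hreach⟩
      have hIn' : ∀ z ∈ C, ∀ x ∈ K \ Reach D K t0, D z x → z ∈ K \ Reach D K t0 := by
        intro z hz x hx hzadj
        have hzX : z ∈ X := hIn z hz x (comp_subset hx1 hx.1) hzadj
        have hzK : z ∈ K := by
          have hmem : z ∈ Comp D X x := Relation.ReflTransGen.tail (mem_comp_self _ _)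
            (Or.inr ⟨hzX, comp_subset hx1 hx.1, hzadj⟩)
          rw [hK, comp_eq_of_mem hx.1]
          exact hmem
        refine ⟨hzK, ?_⟩
        intro hzr
        exact hx.2 (reach_tail hzr hzK hx.1 hzadj)
      obtain ⟨t, htX', hts, htr⟩ :=
        IH x1 hx1 C (fun y hy => hXC (comp_subset hx1 hy.1)) hIn' x1 hx1'
      exact ⟨t, comp_subset hx1 htX'.1, hts, htr⟩

end Generic2
section GenericIso

variable {V : Type*} {W : Type*} {D1 : V → V → Prop} {D2 : W → W → Prop} {φ : V → W}

lemma image_diff_injOn {A C R : Set V} (hinj : Set.InjOn φ A) (hCA : C ⊆ A) (hRC : R ⊆ C) :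
    φ '' C \ φ '' R = φ '' (C \ R) := by
  apply Set.Subset.antisymm
  · rintro w ⟨⟨y, hyC, rfl⟩, hw⟩
    exact ⟨y, ⟨hyC, fun hyR => hw ⟨y, hyR, rfl⟩⟩, rfl⟩
  · rintro w ⟨y, ⟨hyC, hyR⟩, rfl⟩
    refine ⟨⟨y, hyC, rfl⟩, ?_⟩
    rintro ⟨y', hy'R, hy'⟩
    exact hyR (hinj (hCA (hRC hy'R)) (hCA hyC) hy' ▸ hy'R)

lemma dtdLE_iso : ∀ {A : Set V} {n : ℕ}, dtdLE D1 A n →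
    ∀ B : Set W, B = φ '' A → Set.InjOn φ A →
    (∀ x ∈ A, ∀ y ∈ A, (D1 x y ↔ D2 (φ x) (φ y))) → dtdLE D2 B n := by
  intro A n h
  induction h with
  | empty n =>
    intro B hB _ _
    rw [hB, Set.image_empty]
    exact dtdLE.empty _
  | @step A n s hs h IH =>
    intro B hB hinj hedge
    apply dtdLE_step'
    intro b hb
    obtain ⟨x0, hx0, rfl⟩ : ∃ x0 ∈ A, φ x0 = b := by rwa [hB] at hb
    set C := Comp D1 A x0 with hC
    have hCA : C ⊆ A := comp_subset hx0
    -- forward component transfer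
    have hfwd : ∀ y ∈ C, φ y ∈ Comp D2 B (φ x0) := by
      intro y hy
      induction hy with
      | refl => exact mem_comp_self _ _
      | @tail p q hp hpq ih =>
        refine Relation.ReflTransGen.tail ih ?_
        have hpB : φ p ∈ B := by rw [hB]; exact ⟨p, hpq.elim (fun h => h.1) (fun h => h.2.1), rfl⟩
        have hqB : φ q ∈ B := by rw [hB]; exact ⟨q, hpq.elim (fun h => h.2.1) (fun h => h.1), rfl⟩
        rcases hpq with ⟨h1,h2,h3⟩|⟨h1,h2,h3⟩
        · exact Or.inl ⟨hpB, hqB, (hedge p h1 q h2).mp h3⟩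
        · exact Or.inr ⟨hqB, hpB, (hedge q h1 p h2).mp h3⟩
    -- backward component transfer
    have hbwd : ∀ w ∈ Comp D2 B (φ x0), ∃ y ∈ C, φ y = w := by
      intro w hw
      induction hw with
      | refl => exact ⟨x0, mem_comp_self _ _, rfl⟩
      | @tail p q hp hpq ih =>
        obtain ⟨yp, hypC, rfl⟩ := ih
        have hqB : q ∈ B := hpq.elim (fun h => h.2.1) (fun h => h.1)
        obtain ⟨yq, hyqA, rfl⟩ : ∃ yq ∈ A, φ yq = q := by rwa [hB] at hqB
        refine ⟨yq, ?_, rfl⟩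
        have hsym : symAdj D1 A yp yq := by
          rcases hpq with ⟨h1,h2,h3⟩|⟨h1,h2,h3⟩
          · exact Or.inl ⟨hCA hypC, hyqA, (hedge yp (hCA hypC) yq hyqA).mpr h3⟩
          · exact Or.inr ⟨hyqA, hCA hypC, (hedge yq hyqA yp (hCA hypC)).mpr h3⟩
        exact Relation.ReflTransGen.tail hypC hsym
    have hcomp : Comp D2 B (φ x0) = φ '' C := by
      apply Set.Subset.antisymm
      · intro w hw
        obtain ⟨y, hy, rfl⟩ := hbwd w hw
        exact ⟨y, hy, rfl⟩
      · rintro w ⟨y, hy, rfl⟩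
        exact hfwd y hy
    set s0 := s x0 with hs0
    have hsrc := hs x0 hx0
    have hs0C : s0 ∈ C := hsrc.1
    -- source transfer
    have hsrc2 : IsSource D2 (Comp D2 B (φ x0)) (φ s0) := by
      rw [hcomp]
      refine ⟨⟨s0, hs0C, rfl⟩, ?_⟩
      rintro w ⟨z, hzC, rfl⟩ hzadj
      exact hsrc.2 z hzC ((hedge z (hCA hzC) s0 (hCA hs0C)).mpr hzadj)
    -- reach transfer
    have hrfwd : ∀ y ∈ Reach D1 C s0, φ y ∈ Reach D2 (φ '' C) (φ s0) := by
      intro y hy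
      induction hy with
      | refl => exact mem_reach_self _ _
      | @tail p q hp hpq ih =>
        exact Relation.ReflTransGen.tail ih
          ⟨⟨p, hpq.1, rfl⟩, ⟨q, hpq.2.1, rfl⟩,
            (hedge p (hCA hpq.1) q (hCA hpq.2.1)).mp hpq.2.2⟩
    have hrbwd : ∀ w ∈ Reach D2 (φ '' C) (φ s0), ∃ y ∈ Reach D1 C s0, φ y = w := by
      intro w hw
      induction hw with
      | refl => exact ⟨s0, mem_reach_self _ _, rfl⟩
      | @tail p q hp hpq ih =>
        obtain ⟨yp, hypR, rfl⟩ := ih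
        obtain ⟨yq, hyqC, rfl⟩ := hpq.2.1
        have hypC : yp ∈ C := reach_subset hs0C hypR
        refine ⟨yq, ?_, rfl⟩
        exact reach_tail hypR hypC hyqC ((hedge yp (hCA hypC) yq (hCA hyqC)).mpr hpq.2.2)
    have hreach : Reach D2 (φ '' C) (φ s0) = φ '' (Reach D1 C s0) := by
      apply Set.Subset.antisymm
      · intro w hw
        obtain ⟨y, hy, rfl⟩ := hrbwd w hw
        exact ⟨y, hy, rfl⟩
      · rintro w ⟨y, hy, rfl⟩
        exact hrfwd y hy
    refine ⟨φ s0, hsrc2, ?_⟩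
    rw [hcomp, hreach, image_diff_injOn hinj hCA (reach_subset hs0C)]
    exact IH x0 hx0 _ rfl (hinj.mono (fun y hy => hCA hy.1))
      (fun x hx y hy => hedge x (hCA hx.1) y (hCA hy.1))

end GenericIso
/-- The lift of an orientation of `H'` to an orientation of `H`, with the
contracted edge oriented `u → v`. -/
def lift {V W : Type*} (H : SimpleGraph V) (Adj' : W → W → Prop) (f : V → W) (u v : V) :
    V → V → Prop :=
  fun x y => (x = u ∧ y = v) ∨ (H.Adj x y ∧ Adj' (f x) (f y))

section Contraction

variable {V W : Type*} {H : SimpleGraph V} {H' : SimpleGraph W} {f : V → W} {u v : V}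
  {Adj' : W → W → Prop}
  (hc : IsEdgeContraction H H' f u v) (h' : IsAcyclicOrientation H' Adj')

local notation "L" => lift H Adj' f u v

include hc

lemma huv_adj : H.Adj u v := hc.1

lemma hne_uv : u ≠ v := hc.1.ne

lemma fuv : f u = f v := hc.2.1

lemma fiber_cases {x y : V} (h : f x = f y) : x = y ∨ (x = u ∧ y = v) ∨ (x = v ∧ y = u) := by
  by_cases hxy : x = y
  · exact Or.inl hxy
  · exact Or.inr (hc.2.2.2.1 x y h hxy)

lemma fiber_of_eq_fu {y : V} (h : f y = f u) : y = u ∨ y = v := by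
  rcases fiber_cases hc h with h | ⟨h1, h2⟩ | ⟨h1, h2⟩
  · exact Or.inl h
  · exact Or.inl h1
  · exact Or.inr h1

lemma fiber_of_eq_fv {y : V} (h : f y = f v) : y = u ∨ y = v := by
  rcases fiber_cases hc h with h | ⟨h1, h2⟩ | ⟨h1, h2⟩
  · exact Or.inr h
  · exact Or.inl h1
  · exact Or.inr h1

lemma preimage_unique {x y : V} (hxu : x ≠ u) (hxv : x ≠ v) (h : f y = f x) : y = x := by
  rcases fiber_cases hc h with h | ⟨h1, h2⟩ | ⟨h1, h2⟩
  · exact h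
  · exact absurd h2 hxv
  · exact absurd h2 hxu

omit hc in
lemma lift_uv : L u v := Or.inl ⟨rfl, rfl⟩

include h'

lemma adj'_ne {a b : W} (h : Adj' a b) : a ≠ b := (h'.subset a b h).ne

lemma adj'_irrefl (a : W) : ¬ Adj' a a := fun h => (adj'_ne hc h' h) rfl

lemma lift_sub {x y : V} (h : L x y) : H.Adj x y := by
  rcases h with ⟨rfl, rfl⟩ | ⟨h1, _⟩
  · exact hc.1
  · exact h1

lemma lift_proj {x y : V} (h : L x y) : (x = u ∧ y = v) ∨ (f x ≠ f y ∧ Adj' (f x) (f y)) := by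
  rcases h with h | ⟨h1, h2⟩
  · exact Or.inl h
  · exact Or.inr ⟨adj'_ne hc h' h2, h2⟩

lemma adj'_lift {a c : W} (h : Adj' a c) : ∃ x y, f x = a ∧ f y = c ∧ L x y := by
  obtain ⟨hne, x, y, hx, hy, hxy⟩ := (hc.2.2.2.2 a c).mp (h'.subset a c h)
  exact ⟨x, y, hx, hy, Or.inr ⟨hxy, by rw [hx, hy]; exact h⟩⟩

lemma lift_nonfiber {x y : V} (hxu : x ≠ u ∨ y ≠ v) (h : L x y) : Adj' (f x) (f y) := by
  rcases h with ⟨rfl, rfl⟩ | ⟨_, h2⟩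
  · rcases hxu with h | h <;> exact absurd rfl h
  · exact h2

/-- If `x, y` are both outside the fiber `{u, v}`, lifted adjacency matches `Adj'`. -/
lemma lift_iff_nonfiber {x y : V} (hxu : x ≠ u) (hxv : x ≠ v) (hyu : y ≠ u) (hyv : y ≠ v) :
    L x y ↔ Adj' (f x) (f y) := by
  constructor
  · exact lift_nonfiber hc h' (Or.inl hxu)
  · intro h
    obtain ⟨x', y', hx', hy', hL⟩ := adj'_lift hc h' h
    rwa [preimage_unique hc hxu hxv hx', preimage_unique hc hyu hyv hy'] at hL

lemma lift_transGen_proj {x y : V} (h : Relation.TransGen L x y) :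
    Relation.TransGen Adj' (f x) (f y) ∨ (x = u ∧ y = v) := by
  induction h with
  | single h =>
    rcases lift_proj hc h' h with h | ⟨_, h2⟩
    · exact Or.inr h
    · exact Or.inl (Relation.TransGen.single h2)
  | tail hxb hbc ih =>
    rcases lift_proj hc h' hbc with ⟨rfl, rfl⟩ | ⟨_, h2⟩
    · rcases ih with ih | ⟨rfl, rfl⟩
      · exact Or.inl (fuv hc ▸ ih)
      · exact absurd rfl (hne_uv hc)
    · rcases ih with ih | ⟨rfl, rfl⟩
      · exact Or.inl (Relation.TransGen.tail ih h2)
      · exact Or.inl (by rw [← fuv hc] at h2; exact Relation.TransGen.single h2)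

lemma lift_acyclic : Acyclic L := by
  intro x hx
  rcases lift_transGen_proj hc h' hx with h | ⟨h1, h2⟩
  · exact h'.acyclic (f x) h
  · exact hne_uv hc (h1 ▸ h2)

lemma lift_orientation : IsAcyclicOrientation H L := by
  constructor
  · intro x y h; exact lift_sub hc h' h
  · intro x y h
    by_cases hf : f x = f y
    · rcases fiber_cases hc hf with rfl | ⟨rfl, rfl⟩ | ⟨rfl, rfl⟩
      · exact absurd rfl h.ne
      · exact Or.inl lift_uv
      · exact Or.inr lift_uv
    · have hadj' : H'.Adj (f x) (f y) := by
        rw [hc.2.2.2.2]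
        exact ⟨hf, x, y, rfl, rfl, h⟩
      rcases h'.covers _ _ hadj' with h2 | h2
      · exact Or.inl (Or.inr ⟨h, h2⟩)
      · exact Or.inr (Or.inr ⟨h.symm, h2⟩)
  · intro x y h1 h2
    exact lift_acyclic hc h' x (Relation.TransGen.tail (Relation.TransGen.single h1) h2)
  · exact lift_acyclic hc h'

end Contraction
section Contraction2

variable {V W : Type*} {H : SimpleGraph V} {H' : SimpleGraph W} {f : V → W} {u v : V}
  {Adj' : W → W → Prop}
  (hc : IsEdgeContraction H H' f u v) (h' : IsAcyclicOrientation H' Adj')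

local notation "L" => lift H Adj' f u v

lemma image_diff_cond {C T : Set V} (hTC : T ⊆ C)
    (hfd : ∀ x ∈ C \ T, ∀ y ∈ T, f y ≠ f x) : f '' C \ f '' T = f '' (C \ T) := by
  apply Set.Subset.antisymm
  · rintro w ⟨⟨y, hyC, rfl⟩, hw⟩
    exact ⟨y, ⟨hyC, fun hyT => hw ⟨y, hyT, rfl⟩⟩, rfl⟩
  · rintro w ⟨y, hy, rfl⟩
    exact ⟨⟨y, hy.1, rfl⟩, fun ⟨y', hy'T, hy'⟩ => hfd y hy y' hy'T hy'⟩

include hc h'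

lemma sat_mem_fiber {A : Set V} (hsat : u ∈ A ↔ v ∈ A) {x y : V} (hx : x ∈ A)
    (hf : f y = f x) : y ∈ A := by
  rcases fiber_cases hc hf with rfl | ⟨rfl, rfl⟩ | ⟨rfl, rfl⟩
  · exact hx
  · exact hsat.mpr hx
  · exact hsat.mp hx

lemma fiber_connect {A : Set V} {p q : V} (hf : f p = f q) (hp : p ∈ A) (hq : q ∈ A) :
    q ∈ Comp L A p := by
  rcases fiber_cases hc hf with rfl | ⟨rfl, rfl⟩ | ⟨rfl, rfl⟩
  · exact mem_comp_self _ _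
  · exact Relation.ReflTransGen.tail (mem_comp_self _ _) (Or.inl ⟨hp, hq, lift_uv⟩)
  · exact Relation.ReflTransGen.tail (mem_comp_self _ _) (Or.inr ⟨hq, hp, lift_uv⟩)

lemma sat_comp {A : Set V} (hsat : u ∈ A ↔ v ∈ A) {x0 : V} (hx0 : x0 ∈ A) :
    (u ∈ Comp L A x0 ↔ v ∈ Comp L A x0) := by
  constructor
  · intro hu
    have huA : u ∈ A := comp_subset hx0 hu
    have h2 : v ∈ Comp L A u := fiber_connect hc h' (fuv hc) huA (hsat.mp huA)
    rw [comp_eq_of_mem hu]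
    exact h2
  · intro hv
    have hvA : v ∈ A := comp_subset hx0 hv
    have h2 : u ∈ Comp L A v := fiber_connect hc h' (fuv hc).symm hvA (hsat.mpr hvA)
    rw [comp_eq_of_mem hv]
    exact h2

lemma sat_comp_proj {A : Set V} {x0 y : V} (hy : y ∈ Comp L A x0) :
    f y ∈ Comp Adj' (f '' A) (f x0) := by
  induction hy with
  | refl => exact mem_comp_self _ _
  | @tail p q hp hpq ih =>
    have hpA : p ∈ A := hpq.mem_left
    have hqA : q ∈ A := hpq.mem_right
    rcases hpq with ⟨_, _, hL⟩ | ⟨_, _, hL⟩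
    · rcases lift_proj hc h' hL with ⟨rfl, rfl⟩ | ⟨_, h2⟩
      · rwa [← fuv hc]
      · exact Relation.ReflTransGen.tail ih (Or.inl ⟨⟨p, hpA, rfl⟩, ⟨q, hqA, rfl⟩, h2⟩)
    · rcases lift_proj hc h' hL with ⟨rfl, rfl⟩ | ⟨_, h2⟩
      · rwa [fuv hc]
      · exact Relation.ReflTransGen.tail ih (Or.inr ⟨⟨q, hqA, rfl⟩, ⟨p, hpA, rfl⟩, h2⟩)

lemma sat_comp_lift {A : Set V} (hsat : u ∈ A ↔ v ∈ A) {x0 : V} (hx0 : x0 ∈ A) :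
    ∀ b ∈ Comp Adj' (f '' A) (f x0), ∀ y, f y = b → y ∈ Comp L A x0 := by
  intro b hb
  induction hb with
  | refl =>
    intro y hy
    have hyA : y ∈ A := sat_mem_fiber hc h' hsat hx0 hy
    exact mem_comp_comm (fiber_connect hc h' hy hyA hx0)
  | @tail a c ha hac ih =>
    intro y hy
    have hcB : c ∈ f '' A := hac.mem_right
    obtain ⟨yc0, hyc0A, hfyc0⟩ := hcB
    have hyA : y ∈ A := sat_mem_fiber hc h' hsat hyc0A (hy.trans hfyc0.symm)
    have haB : a ∈ f '' A := hac.mem_left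
    obtain ⟨ya0, hya0A, hfya0⟩ := haB
    rcases hac with ⟨_, _, hadj⟩ | ⟨_, _, hadj⟩
    · obtain ⟨x', y', hx', hy', hL⟩ := adj'_lift hc h' hadj
      have hx'A : x' ∈ A := sat_mem_fiber hc h' hsat hya0A (hx'.trans hfya0.symm)
      have hy'A : y' ∈ A := sat_mem_fiber hc h' hsat hyA (hy'.trans hy.symm)
      have hx'C : x' ∈ Comp L A x0 := ih x' hx'
      have hy'C : y' ∈ Comp L A x0 :=
        Relation.ReflTransGen.tail hx'C (Or.inl ⟨hx'A, hy'A, hL⟩)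
      rw [comp_eq_of_mem hy'C]
      exact fiber_connect hc h' (hy'.trans hy.symm) hy'A hyA
    · obtain ⟨x', y', hx', hy', hL⟩ := adj'_lift hc h' hadj
      have hx'A : x' ∈ A := sat_mem_fiber hc h' hsat hyA (hx'.trans hy.symm)
      have hy'A : y' ∈ A := sat_mem_fiber hc h' hsat hya0A (hy'.trans hfya0.symm)
      have hy'C : y' ∈ Comp L A x0 := ih y' hy'
      have hx'C : x' ∈ Comp L A x0 :=
        Relation.ReflTransGen.tail hy'C (Or.inr ⟨hx'A, hy'A, hL⟩)
      rw [comp_eq_of_mem hx'C]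
      exact fiber_connect hc h' (hx'.trans hy.symm) hx'A hyA

lemma sat_comp_eq {A : Set V} (hsat : u ∈ A ↔ v ∈ A) {x0 : V} (hx0 : x0 ∈ A) :
    Comp Adj' (f '' A) (f x0) = f '' Comp L A x0 := by
  apply Set.Subset.antisymm
  · intro b hb
    have hfx0 : f x0 ∈ f '' A := ⟨x0, hx0, rfl⟩
    obtain ⟨y0, hy0A, hfy0⟩ : b ∈ f '' A := comp_subset hfx0 hb
    exact ⟨y0, sat_comp_lift hc h' hsat hx0 b hb y0 hfy0, hfy0⟩
  · rintro b ⟨y, hy, rfl⟩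
    exact sat_comp_proj hc h' hy

lemma reach_proj {C : Set V} {x0 y : V} (hy : y ∈ Reach L C x0) :
    f y ∈ Reach Adj' (f '' C) (f x0) := by
  induction hy with
  | refl => exact mem_reach_self _ _
  | @tail p q hp hpq ih =>
    rcases lift_proj hc h' hpq.2.2 with ⟨rfl, rfl⟩ | ⟨_, h2⟩
    · rwa [← fuv hc]
    · exact Relation.ReflTransGen.tail ih
        ⟨⟨p, hpq.1, rfl⟩, ⟨q, hpq.2.1, rfl⟩, h2⟩

/-- The image of the reach of `x0` in a fiber-closed set `C` containing `u, v`. -/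
lemma lift_reach {C : Set V} (hfib : ∀ x ∈ C, ∀ y, f y = f x → y ∈ C)
    (hu : u ∈ C) (hv : v ∈ C) {x0 : V} (hx0 : x0 ∈ C) :
    Reach Adj' (f '' C) (f x0) =
      f '' (Reach L C x0 ∪ {y | y ∈ Reach L C u ∧ v ∈ Reach L C x0}) := by
  set T : Set V := Reach L C x0 ∪ {y | y ∈ Reach L C u ∧ v ∈ Reach L C x0} with hT
  have hTC : T ⊆ C := by
    rintro y (hy | ⟨hy, _⟩)
    · exact reach_subset hx0 hy
    · exact reach_subset hu hy
  have Tclosed : ∀ p ∈ T, ∀ q ∈ C, L p q → q ∈ T := by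
    rintro p (hp | ⟨hp, hcond⟩) q hq hL
    · exact Or.inl (reach_tail hp (reach_subset hx0 hp) hq hL)
    · exact Or.inr ⟨reach_tail hp (reach_subset hu hp) hq hL, hcond⟩
  have Tfiber : ∀ p ∈ T, ∀ q ∈ C, f q = f p → q ∈ T := by
    intro p hp q hq hf
    rcases fiber_cases hc hf with rfl | ⟨rfl, rfl⟩ | ⟨rfl, rfl⟩
    · exact hp
    · -- q = u, p = v
      rcases hp with hp | ⟨_, hcond⟩
      · exact Or.inr ⟨mem_reach_self _ _, hp⟩
      · exact Or.inr ⟨mem_reach_self _ _, hcond⟩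
    · -- q = v, p = u
      rcases hp with hp | ⟨_, hcond⟩
      · exact Or.inl (reach_tail hp (reach_subset hx0 hp) hv lift_uv)
      · exact Or.inl hcond
  apply Set.Subset.antisymm
  · intro w hw
    induction hw with
    | refl => exact ⟨x0, Or.inl (mem_reach_self _ _), rfl⟩
    | @tail a c ha hac ih =>
      obtain ⟨ya, hyaT, hfya⟩ := ih
      obtain ⟨xc0, hxc0C, hfxc0⟩ := hac.2.1
      obtain ⟨x', y', hx', hy', hL⟩ := adj'_lift hc h' hac.2.2
      have hx'C : x' ∈ C := hfib ya (hTC hyaT) x' (hx'.trans hfya.symm)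
      have hy'C : y' ∈ C := hfib xc0 hxc0C y' (hy'.trans hfxc0.symm)
      have hx'T : x' ∈ T := Tfiber ya hyaT x' hx'C (hx'.trans hfya.symm)
      have hy'T : y' ∈ T := Tclosed x' hx'T y' hy'C hL
      exact ⟨y', hy'T, hy'⟩
  · rintro w ⟨y, hy, rfl⟩
    rcases hy with hy | ⟨hy, hcond⟩
    · exact reach_proj hc h' hy
    · have h1 : f u ∈ Reach Adj' (f '' C) (f x0) := by
        rw [fuv hc]
        exact reach_proj hc h' hcond
      have h2 : f y ∈ Reach Adj' (f '' C) (f u) := reach_proj hc h' hy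
      exact reach_trans h1 h2

end Contraction2
section Contraction3

variable {V W : Type*} {H : SimpleGraph V} {H' : SimpleGraph W} {f : V → W} {u v : V}
  {Adj' : W → W → Prop}
  (hc : IsEdgeContraction H H' f u v) (h' : IsAcyclicOrientation H' Adj')

local notation "L" => lift H Adj' f u v

include hc h'

/-- Transfer along `f` on a fiber-free set. -/
lemma iso_fwd {A : Set V} {n : ℕ} (hAu : u ∉ A) (hAv : v ∉ A) (h : dtdLE L A n) :
    dtdLE Adj' (f '' A) n := by
  refine dtdLE_iso h _ rfl ?_ ?_
  · intro x hx y hy hxy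
    rcases fiber_cases hc hxy with h | ⟨rfl, rfl⟩ | ⟨rfl, rfl⟩
    · exact h
    · exact absurd hx hAu
    · exact absurd hx hAv
  · intro x hx y hy
    exact lift_iff_nonfiber hc h'
      (fun h => hAu (h ▸ hx)) (fun h => hAv (h ▸ hx))
      (fun h => hAu (h ▸ hy)) (fun h => hAv (h ▸ hy))

/-- A non-fiber source of a fiber-closed `C` maps to a source of the image. -/
lemma src_img {C : Set V} (hfib : ∀ x ∈ C, ∀ y, f y = f x → y ∈ C) {t : V}
    (ht : IsSource L C t) (htu : t ≠ u) (htv : t ≠ v) :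
    IsSource Adj' (f '' C) (f t) := by
  refine ⟨⟨t, ht.1, rfl⟩, ?_⟩
  rintro a ⟨xa, hxaC, rfl⟩ hadj
  obtain ⟨x', y', hx', hy', hL⟩ := adj'_lift hc h' hadj
  have hy't : y' = t := preimage_unique hc htu htv hy'
  have hx'C : x' ∈ C := hfib xa hxaC x' hx'
  exact ht.2 x' hx'C (hy't ▸ hL)

/-- Main transfer, direction 1: a saturated elimination forest pushes to the image. -/
lemma sat_transfer : ∀ {A : Set V} {n : ℕ}, dtdLE L A n → (u ∈ A ↔ v ∈ A) →
    dtdLE Adj' (f '' A) n := by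
  intro A n h
  induction h with
  | empty n =>
    intro _
    rw [Set.image_empty]
    exact dtdLE.empty _
  | @step A n s hs h IH =>
    intro hsat
    have hAfull : dtdLE L A (n + 1) := dtdLE.step A n s hs h
    apply dtdLE_step'
    rintro b ⟨x0, hx0, rfl⟩
    set C := Comp L A x0 with hC
    have hCA : C ⊆ A := comp_subset hx0
    have hCsat : u ∈ C ↔ v ∈ C := sat_comp hc h' hsat hx0
    have hcompeq : Comp Adj' (f '' A) (f x0) = f '' C := sat_comp_eq hc h' hsat hx0
    by_cases hvC : v ∈ C
    · -- the component contains the whole fiber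
      have huC : u ∈ C := hCsat.mpr hvC
      have hfibC : ∀ x ∈ C, ∀ y, f y = f x → y ∈ C := by
        intro x hx y hf
        rcases fiber_cases hc hf with rfl | ⟨rfl, rfl⟩ | ⟨rfl, rfl⟩
        · exact hx
        · exact huC
        · exact hvC
      set s0 := s x0 with hs0def
      have hsrc := hs x0 hx0
      have hs0C : s0 ∈ C := hsrc.1
      have rem0 : dtdLE L (C \ Reach L C s0) n := h x0 hx0
      have hs0v : s0 ≠ v := by
        rintro rfl
        exact hsrc.2 u huC lift_uv
      set RU : Set V := Reach L C u with hRU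
      have hvRU : v ∈ RU := reach_tail (mem_reach_self _ _) huC hvC lift_uv
      by_cases hs0u : s0 = u
      · -- chosen source is u
        rw [hs0u] at rem0
        by_cases hw0src : ∀ a ∈ f '' C, ¬ Adj' a (f u)
        · -- f u is a source of the image component
          refine ⟨f u, ?_, ?_⟩
          · rw [hcompeq]
            exact ⟨⟨u, huC, rfl⟩, hw0src⟩
          · rw [hcompeq]
            have hlr := lift_reach hc h' hfibC huC hvC huC
            have hTRU : (Reach L C u ∪ {y | y ∈ Reach L C u ∧ v ∈ Reach L C u}) = RU := by
              apply Set.Subset.antisymm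
              · rintro y (hy | ⟨hy, _⟩) <;> exact hy
              · intro y hy; exact Or.inl hy
            rw [hTRU] at hlr
            rw [hlr]
            have hdiff : f '' C \ f '' RU = f '' (C \ RU) := by
              apply image_diff_cond (reach_subset huC)
              intro x hx y hy hf
              rcases fiber_cases hc hf with rfl | ⟨rfl, rfl⟩ | ⟨rfl, rfl⟩
              · exact hx.2 hy
              · exact hx.2 hvRU
              · exact hx.2 (mem_reach_self _ _)
            rw [hdiff]
            refine iso_fwd hc h' ?_ ?_ rem0
            · exact fun hmem => hmem.2 (mem_reach_self _ _)
            · exact fun hmem => hmem.2 hvRU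
        · -- f u is not a source: find another source reaching v
          push_neg at hw0src
          obtain ⟨a, haC, hadj⟩ := hw0src
          obtain ⟨x', y', hx', hy', hL⟩ := adj'_lift hc h' hadj
          obtain ⟨xa, hxaC, hfxa⟩ := haC
          have hx'C : x' ∈ C := hfibC xa hxaC x' (hx'.trans hfxa.symm)
          have hy'uv : y' = u ∨ y' = v := fiber_of_eq_fu hc hy'
          have hx1v : L x' v := by
            rcases hy'uv with rfl | rfl
            · exfalso
              apply hsrc.2 x' hx'C
              rw [← hs0def, hs0u]
              exact hL
            · exact hL
          have hx'u : x' ≠ u := by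
            rintro rfl
            rw [← hx'] at hadj
            exact adj'_irrefl hc h' _ hadj
          have hx'v : x' ≠ v := (lift_sub hc h' hx1v).ne
          have hx'RU : x' ∉ RU := by
            intro hmem
            have htg : Relation.TransGen L u x' := by
              have : Relation.ReflTransGen L u x' :=
                Relation.ReflTransGen.mono (fun a b h => h.2.2) _ _ hmem
              rcases (Relation.reflTransGen_iff_eq_or_transGen.mp this) with rfl | htg
              · exact absurd rfl hx'u.symm
              · exact htg
            rcases lift_transGen_proj hc h' htg with htg' | ⟨_, rfl⟩
            · rw [hx'] at htg'
              exact h'.acyclic (f u) (Relation.TransGen.tail htg' hadj)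
            · exact hx'v rfl
          have hXin : ∀ z ∈ C, ∀ x ∈ C \ RU, L z x → z ∈ C \ RU := by
            intro z hz x hx hzx
            refine ⟨hz, fun hzRU => hx.2 (reach_tail hzRU hz hx.1 hzx)⟩
          obtain ⟨t, htX, htsrc, hx1Rt⟩ :=
            dtdLE_back rem0 C Set.diff_subset hXin x' ⟨hx'C, hx'RU⟩
          set Rt : Set V := Reach L C t with hRt
          have hx'Ct : x' ∈ C := hx'C
          have hvRt : v ∈ Rt := reach_tail hx1Rt (reach_subset htsrc.1 hx1Rt) hvC hx1v
          have htu : t ≠ u := by rintro rfl; exact htX.2 (mem_reach_self _ _)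
          have htv : t ≠ v := by rintro rfl; exact htX.2 hvRU
          refine ⟨f t, ?_, ?_⟩
          · rw [hcompeq]
            exact src_img hc h' hfibC htsrc htu htv
          · rw [hcompeq]
            have hlr := lift_reach hc h' hfibC huC hvC htsrc.1
            rw [hlr]
            set T : Set V := Reach L C t ∪ {y | y ∈ Reach L C u ∧ v ∈ Reach L C t} with hT
            have hTeq : T = Rt ∪ RU := by
              apply Set.Subset.antisymm
              · rintro y (hy | ⟨hy, _⟩)
                · exact Or.inl hy
                · exact Or.inr hy
              · rintro y (hy | hy)
                · exact Or.inl hy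
                · exact Or.inr ⟨hy, hvRt⟩
            have hTC : T ⊆ C := by
              rw [hTeq]
              rintro y (hy | hy)
              · exact reach_subset htsrc.1 hy
              · exact reach_subset huC hy
            have hdiff : f '' C \ f '' T = f '' (C \ T) := by
              apply image_diff_cond hTC
              intro x hx y hy hf
              rcases fiber_cases hc hf with rfl | ⟨rfl, rfl⟩ | ⟨rfl, rfl⟩
              · exact hx.2 hy
              · exact hx.2 (hTeq ▸ Or.inl hvRt)
              · exact hx.2 (hTeq ▸ Or.inr (mem_reach_self _ _))
            rw [hdiff]
            have hout : ∀ x ∈ Rt, ∀ y ∈ C \ RU, L x y → y ∈ Rt := by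
              intro x hx y hy hxy
              exact reach_tail hx (reach_subset htsrc.1 hx) hy.1 hxy
            have hrem2 : dtdLE L ((C \ RU) \ Rt) n := dtdLE_removeOut rem0 Rt hout
            have hseteq : (C \ RU) \ Rt = C \ T := by
              rw [hTeq]
              ext x
              constructor
              · rintro ⟨⟨h1, h2⟩, h3⟩
                exact ⟨h1, fun hh => hh.elim h3 h2⟩
              · rintro ⟨h1, h2⟩
                exact ⟨⟨h1, fun hh => h2 (Or.inr hh)⟩, fun hh => h2 (Or.inl hh)⟩
            rw [hseteq] at hrem2
            refine iso_fwd hc h' ?_ ?_ hrem2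
            · exact fun hmem => hmem.2 (hTeq ▸ Or.inr (mem_reach_self _ _))
            · exact fun hmem => hmem.2 (hTeq ▸ Or.inl hvRt)
      · -- chosen source s0 is not in the fiber
        have hs0nu : s0 ≠ u := hs0u
        refine ⟨f s0, ?_, ?_⟩
        · rw [hcompeq]
          exact src_img hc h' hfibC hsrc hs0nu hs0v
        · rw [hcompeq]
          have hlr := lift_reach hc h' hfibC huC hvC hs0C
          rw [hlr]
          set R0 : Set V := Reach L C s0 with hR0
          set T : Set V := R0 ∪ {y | y ∈ Reach L C u ∧ v ∈ R0} with hT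
          by_cases hvR0 : v ∈ R0
          · by_cases huR0 : u ∈ R0
            · -- whole fiber inside the reach
              have hTeqR0 : C \ T = C \ R0 := by
                ext x
                constructor
                · rintro ⟨h1, h2⟩
                  exact ⟨h1, fun hh => h2 (Or.inl hh)⟩
                · rintro ⟨h1, h2⟩
                  refine ⟨h1, ?_⟩
                  rintro (hh | ⟨hh, _⟩)
                  · exact h2 hh
                  · exact h2 (reach_trans huR0 hh)
              have hdiff : f '' C \ f '' T = f '' (C \ T) := by
                apply image_diff_cond
                · rintro y (hy | ⟨hy, _⟩)
                  · exact reach_subset hs0C hy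
                  · exact reach_subset huC hy
                · intro x hx y hy hf
                  rcases fiber_cases hc hf with rfl | ⟨rfl, rfl⟩ | ⟨rfl, rfl⟩
                  · exact hx.2 hy
                  · exact hx.2 (Or.inl hvR0)
                  · exact hx.2 (Or.inl huR0)
              rw [hdiff, hTeqR0]
              refine iso_fwd hc h' ?_ ?_ rem0
              · exact fun hmem => hmem.2 huR0
              · exact fun hmem => hmem.2 hvR0
            · -- junk case: u survives but v does not
              have hTeq : T = R0 ∪ RU := by
                apply Set.Subset.antisymm
                · rintro y (hy | ⟨hy, _⟩)
                  · exact Or.inl hy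
                  · exact Or.inr hy
                · rintro y (hy | hy)
                  · exact Or.inl hy
                  · exact Or.inr ⟨hy, hvR0⟩
              have hdiff : f '' C \ f '' T = f '' (C \ T) := by
                apply image_diff_cond
                · rintro y (hy | ⟨hy, _⟩)
                  · exact reach_subset hs0C hy
                  · exact reach_subset huC hy
                · intro x hx y hy hf
                  rcases fiber_cases hc hf with rfl | ⟨rfl, rfl⟩ | ⟨rfl, rfl⟩
                  · exact hx.2 hy
                  · exact hx.2 (Or.inl hvR0)
                  · exact hx.2 (hTeq ▸ Or.inr (mem_reach_self _ _))
              rw [hdiff]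
              have hout : ∀ x ∈ RU, ∀ y ∈ C \ R0, L x y → y ∈ RU := by
                intro x hx y hy hxy
                exact reach_tail hx (reach_subset huC hx) hy.1 hxy
              have hrem2 : dtdLE L ((C \ R0) \ RU) n := dtdLE_removeOut rem0 RU hout
              have hseteq : (C \ R0) \ RU = C \ T := by
                rw [hTeq]
                ext x
                constructor
                · rintro ⟨⟨h1, h2⟩, h3⟩
                  exact ⟨h1, fun hh => hh.elim h2 h3⟩
                · rintro ⟨h1, h2⟩
                  exact ⟨⟨h1, fun hh => h2 (Or.inl hh)⟩, fun hh => h2 (Or.inr hh)⟩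
              rw [hseteq] at hrem2
              refine iso_fwd hc h' ?_ ?_ hrem2
              · exact fun hmem => hmem.2 (hTeq ▸ Or.inr (mem_reach_self _ _))
              · exact fun hmem => hmem.2 (hTeq ▸ Or.inl hvR0)
          · -- v (hence u) not reached: recurse with the saturated remainder
            have huR0 : u ∉ R0 := fun hh =>
              hvR0 (reach_tail hh (reach_subset hs0C hh) hvC lift_uv)
            have hTeqR0 : T = R0 := by
              apply Set.Subset.antisymm
              · rintro y (hy | ⟨_, hy⟩)
                · exact hy
                · exact absurd hy hvR0
              · intro y hy
                exact Or.inl hy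
            rw [hTeqR0]
            have hdiff : f '' C \ f '' R0 = f '' (C \ R0) := by
              apply image_diff_cond (reach_subset hs0C)
              intro x hx y hy hf
              rcases fiber_cases hc hf with rfl | ⟨rfl, rfl⟩ | ⟨rfl, rfl⟩
              · exact hx.2 hy
              · exact absurd hy huR0
              · exact absurd hy hvR0
            rw [hdiff]
            exact IH x0 hx0 ⟨fun _ => ⟨hvC, hvR0⟩, fun _ => ⟨huC, huR0⟩⟩
    · -- fiber-free component: pure isomorphism
      have huC : u ∉ C := fun hh => hvC (hCsat.mp hh)
      have hCn1 : dtdLE L C (n + 1) := dtdLE_compUnion hAfull hCA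
        (fun b hb => by rw [hC, comp_eq_of_mem hb])
      have himg : dtdLE Adj' (f '' C) (n + 1) := iso_fwd hc h' huC hvC hCn1
      have hfCfA : f '' C ⊆ f '' A := Set.image_mono hCA
      have hccomp : Comp Adj' (f '' C) (f x0) = f '' C := by
        rw [comp_restrict hfCfA (le_of_eq hcompeq), hcompeq]
      obtain ⟨m, t, hm, hsrc', hrem'⟩ := dtdLE_inversion himg (⟨x0, mem_comp_self A x0, rfl⟩ :
        f x0 ∈ f '' C)
      obtain rfl : m = n := by omega
      rw [hccomp] at hsrc' hrem'
      refine ⟨t, ?_, ?_⟩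
      · rw [hcompeq]
        exact hsrc'
      · rw [hcompeq]
        exact hrem'

end Contraction3
section Generic4

variable {V : Type*} {D : V → V → Prop}

lemma reach_mem_start {A : Set V} {s y : V} (h : y ∈ Reach D A s) (hy : y ∈ A) : s ∈ A := by
  rcases Relation.ReflTransGen.cases_head h with rfl | ⟨c, hstep, _⟩
  · exact hy
  · exact hstep.1

/-- A reach avoiding an out-closed set survives in the complement. -/
lemma reach_diff {C R : Set V} (hR : ∀ x ∈ R, ∀ y ∈ C, D x y → y ∈ R) {s y : V}
    (hy : y ∈ Reach D C s) (hyR : y ∉ R) : y ∈ Reach D (C \ R) s := by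
  induction hy with
  | refl => exact mem_reach_self _ _
  | @tail p q hp hpq ih =>
    have hpR : p ∉ R := fun hh => hyR (hR p hh q hpq.2.1 hpq.2.2)
    exact Relation.ReflTransGen.tail (ih hpR) ⟨⟨hpq.1, hpR⟩, ⟨hpq.2.1, hyR⟩, hpq.2.2⟩

/-- Extract one elimination step at `x0` from a bound on its component. -/
lemma extract_step {A : Set V} {x0 : V} {m j : ℕ} (hx0 : x0 ∈ A)
    (h : dtdLE D (Comp D A x0) m) (hmj : m ≤ j + 1) :
    ∃ t, IsSource D (Comp D A x0) t ∧
      dtdLE D (Comp D A x0 \ Reach D (Comp D A x0) t) j := by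
  obtain ⟨m1, t, hm1, hsrc, hrem⟩ := dtdLE_inversion h (mem_comp_self A x0)
  have hcc : Comp D (Comp D A x0) x0 = Comp D A x0 :=
    comp_restrict (comp_subset hx0) (le_refl _)
  rw [hcc] at hsrc hrem
  exact ⟨t, hsrc, dtdLE_mono hrem (by omega)⟩

end Generic4

section Contraction4

variable {V W : Type*} {H : SimpleGraph V} {H' : SimpleGraph W} {f : V → W} {u v : V}
  {Adj' : W → W → Prop}
  (hc : IsEdgeContraction H H' f u v) (h' : IsAcyclicOrientation H' Adj')

local notation "L" => lift H Adj' f u v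

include hc h'

/-- Transfer back along `f` on a fiber-free set of the contracted graph. -/
lemma iso_rev {B0 : Set W} {n : ℕ} (hw0 : f u ∉ B0) (h : dtdLE Adj' B0 n) :
    dtdLE L (f ⁻¹' B0) n := by
  set g : W → V := Function.surjInv hc.2.2.1 with hg
  have hfg : ∀ b, f (g b) = b := fun b => Function.surjInv_eq hc.2.2.1 b
  have hgne : ∀ b ∈ B0, g b ≠ u ∧ g b ≠ v := by
    intro b hb
    constructor
    · rintro hgb
      rw [← hgb, hfg] at hw0; exact hw0 hb
    · rintro hgb
      have : f (g b) = b := hfg b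
      rw [hgb, ← fuv hc] at this
      exact hw0 (this ▸ hb)
  refine dtdLE_iso (φ := g) h (f ⁻¹' B0) ?_ ?_ ?_
  · apply Set.Subset.antisymm
    · intro x hx
      have hxu : x ≠ u := fun hh => hw0 (hh ▸ hx)
      have hxv : x ≠ v := by
        intro hh
        apply hw0
        have hx' : f x ∈ B0 := hx
        rw [hh, ← fuv hc] at hx'
        exact hx'
      refine ⟨f x, hx, ?_⟩
      exact preimage_unique hc hxu hxv (hfg (f x))
    · rintro x ⟨b, hb, rfl⟩
      show f (g b) ∈ B0
      rw [hfg]; exact hb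
  · intro a ha b hb hab
    rw [← hfg a, ← hfg b, hab]
  · intro a ha b hb
    have h1 := lift_iff_nonfiber hc h' (hgne a ha).1 (hgne a ha).2 (hgne b hb).1 (hgne b hb).2
    rw [hfg, hfg] at h1
    exact h1.symm

/-- Components of the contracted graph lift into components of the lift (no fiber in `B`). -/
lemma nofib_comp_lift {B : Set W} {A : Set V} (hw0 : f u ∉ B)
    (h1 : ∀ x, f x ∈ B → x ∈ A) {y : V} (hyA : y ∈ A) (hyB : f y ∈ B) :
    ∀ b ∈ Comp Adj' B (f y), ∀ x, f x = b → x ∈ Comp L A y := by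
  have hnf : ∀ {c : W}, c ∈ B → ∀ {x x' : V}, f x = c → f x' = c → x = x' := by
    intro c hc' x x' hx hx'
    rcases fiber_cases hc (hx.trans hx'.symm) with h | ⟨rfl, rfl⟩ | ⟨rfl, rfl⟩
    · exact h
    · exact absurd (hx ▸ hc') hw0
    · exact absurd (hx' ▸ hc') hw0
  intro b hb
  induction hb with
  | refl =>
    intro x hx
    have : x = y := hnf hyB hx rfl
    rw [this]; exact mem_comp_self _ _
  | @tail a c ha hac ih =>
    intro x hx
    have haB : a ∈ B := hac.elim (fun h => h.1) (fun h => h.2.1)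
    have hcB : c ∈ B := hac.elim (fun h => h.2.1) (fun h => h.1)
    rcases hac with ⟨_, _, hadj⟩ | ⟨_, _, hadj⟩
    · obtain ⟨x', y', hx', hy', hL⟩ := adj'_lift hc h' hadj
      have hx'C : x' ∈ Comp L A y := ih x' hx'
      have hy'A : y' ∈ A := h1 y' (hy' ▸ hcB)
      have hy'C : y' ∈ Comp L A y := Relation.ReflTransGen.tail hx'C
        (Or.inl ⟨comp_subset hyA hx'C, hy'A, hL⟩)
      rwa [hnf hcB hx hy']
    · obtain ⟨x', y', hx', hy', hL⟩ := adj'_lift hc h' hadj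
      have hy'C : y' ∈ Comp L A y := ih y' hy'
      have hx'A : x' ∈ A := h1 x' (hx' ▸ hcB)
      have hx'C : x' ∈ Comp L A y := Relation.ReflTransGen.tail hy'C
        (Or.inr ⟨hx'A, comp_subset hyA hy'C, hL⟩)
      rwa [hnf hcB hx hx']

/-- All-live components project into components of the contracted graph. -/
lemma nofib_comp_proj {A : Set V} {x0 : V} (hx0 : x0 ∈ A) {B : Set W}
    (hall : ∀ y ∈ Comp L A x0, f y ∈ B) :
    ∀ y ∈ Comp L A x0, f y ∈ Comp Adj' B (f x0) := by
  intro y hy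
  induction hy with
  | refl => exact mem_comp_self _ _
  | @tail p q hp hpq ih =>
    have hpC : p ∈ Comp L A x0 := hp
    have hqC : q ∈ Comp L A x0 := Relation.ReflTransGen.tail hp hpq
    have hpB : f p ∈ B := hall p hpC
    have hqB : f q ∈ B := hall q hqC
    rcases hpq with ⟨_, _, hL⟩ | ⟨_, _, hL⟩
    · rcases lift_proj hc h' hL with ⟨rfl, rfl⟩ | ⟨_, hadj⟩
      · rwa [← fuv hc]
      · exact Relation.ReflTransGen.tail ih (Or.inl ⟨hpB, hqB, hadj⟩)
    · rcases lift_proj hc h' hL with ⟨rfl, rfl⟩ | ⟨_, hadj⟩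
      · rwa [fuv hc]
      · exact Relation.ReflTransGen.tail ih (Or.inr ⟨hqB, hpB, hadj⟩)

end Contraction4
/-- Invariant for the reverse simulation: `A` consists of the preimage of `B`
together with possibly some "junk" reachable from `u` whose images were deleted. -/
def RInv {V W : Type*} (H : SimpleGraph V) (Adj' : W → W → Prop) (f : V → W) (u v : V)
    (B : Set W) (A : Set V) : Prop :=
  (∀ x : V, f x ∈ B → x ∈ A) ∧
  (∀ j ∈ A, f j ∉ B → ∀ y ∈ A, lift H Adj' f u v j y → f y ∉ B) ∧
  (∀ j ∈ A, f j ∉ B → j ∈ Reach (lift H Adj' f u v) A u) ∧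
  (f u ∈ B → ∀ x ∈ A, f x ∈ B) ∧
  (v ∈ A ↔ f u ∈ B)

/-- Clock: if junk exists then either `u` has no live in-neighbour, or some live
in-neighbour's component has small depth. -/
def RClock {V W : Type*} (H : SimpleGraph V) (Adj' : W → W → Prop) (f : V → W) (u v : V)
    (B : Set W) (A : Set V) (k : ℕ) : Prop :=
  (∃ j ∈ A, f j ∉ B) →
  ((∀ z ∈ A, f z ∈ B → ¬ lift H Adj' f u v z u) ∨
   (∃ z ∈ A, f z ∈ B ∧ lift H Adj' f u v z u ∧ dtdLE Adj' (Comp Adj' B (f z)) k))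

section Contraction5

variable {V W : Type*} {H : SimpleGraph V} {H' : SimpleGraph W} {f : V → W} {u v : V}
  {Adj' : W → W → Prop}
  (hc : IsEdgeContraction H H' f u v) (h' : IsAcyclicOrientation H' Adj')

local notation "L" => lift H Adj' f u v

include hc h'

lemma revc : ∀ (n k : ℕ), k ≤ n → ∀ (B : Set W) (A : Set V),
    dtdLE Adj' B n → (f u ∈ B → k = n) → RInv H Adj' f u v B A →
    RClock H Adj' f u v B A k → dtdLE L A (n + k + 1) := by
  intro n
  induction n using Nat.strong_induction_on with
  | _ n IHn =>
  intro k
  induction k using Nat.strong_induction_on with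
  | _ k IHk =>
  intro hkn B A hB hS1 hinv hclock
  obtain ⟨hinv1, hinv2, hinv3, hinv4, hinv5⟩ := hinv
  apply dtdLE_step'
  intro x0 hx0
  set C := Comp L A x0 with hCdef
  have hCA : C ⊆ A := comp_subset hx0
  by_cases hlive : ∃ y ∈ C, f y ∈ B
  case neg =>
    -- CASE I: a pure junk component; `u` is a source and reaches everything
    push_neg at hlive
    have hx0j : f x0 ∉ B := hlive x0 (mem_comp_self _ _)
    have hx0R : x0 ∈ Reach L A u := hinv3 x0 hx0 hx0j
    have huA : u ∈ A := reach_mem_start hx0R hx0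
    have huC : u ∈ C := mem_comp_comm (reach_subset_comp hx0R)
    refine ⟨u, ⟨huC, ?_⟩, ?_⟩
    · intro z hzC hzadj
      have hzR : z ∈ Reach L A u := hinv3 z (hCA hzC) (hlive z hzC)
      have hrtg : Relation.ReflTransGen L u z :=
        Relation.ReflTransGen.mono (fun a b h => h.2.2) _ _ hzR
      exact lift_acyclic hc h' u (Relation.TransGen.tail' hrtg hzadj)
    · have hempty : C \ Reach L C u = ∅ := by
        rw [Set.diff_eq_empty]
        intro y hyC
        have hyR : y ∈ Reach L A u := hinv3 y (hCA hyC) (hlive y hyC)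
        have h1 : Reach L C u = Reach L A u := by
          rw [hCdef, comp_eq_of_mem huC]
          exact reach_comp_eq huA
        rw [h1]; exact hyR
      rw [hempty]; exact dtdLE.empty _
  case pos =>
  obtain ⟨y1, hy1C, hy1B⟩ := hlive
  by_cases hw0B : f u ∈ B
  · -- S1 : saturated state
    have hkeq : k = n := hS1 hw0B
    have hAeq : ∀ x, x ∈ A ↔ f x ∈ B :=
      fun x => ⟨fun hx => hinv4 hw0B x hx, fun hx => hinv1 x hx⟩
    have hvA : v ∈ A := hinv5.mpr hw0B
    have huA : u ∈ A := hinv1 u hw0B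
    have hsat : u ∈ A ↔ v ∈ A := iff_of_true huA hvA
    have hBimg : B = f '' A := by
      apply Set.Subset.antisymm
      · intro b hb
        obtain ⟨x, rfl⟩ := hc.2.2.1 b
        exact ⟨x, hinv1 x hb, rfl⟩
      · rintro b ⟨x, hxA, rfl⟩
        exact (hAeq x).mp hxA
    have hx0B : f x0 ∈ B := (hAeq x0).mp hx0
    have hcompB : Comp Adj' B (f x0) = f '' C := by
      rw [hBimg]; exact sat_comp_eq hc h' hsat hx0
    obtain ⟨m, σ, hnm, hσsrc, hσrem⟩ := dtdLE_inversion hB hx0B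
    have hCsat : u ∈ C ↔ v ∈ C := sat_comp hc h' hsat hx0
    by_cases hvC : v ∈ C
    · -- fiber inside the component
      have huC : u ∈ C := hCsat.mpr hvC
      have hfibC : ∀ x ∈ C, ∀ y, f y = f x → y ∈ C := by
        intro x hxC y hf
        rcases fiber_cases hc hf with rfl | ⟨rfl, rfl⟩ | ⟨rfl, rfl⟩
        · exact hxC
        · exact huC
        · exact hvC
      have hvRU : v ∈ Reach L C u :=
        reach_tail (mem_reach_self _ _) huC hvC lift_uv
      by_cases hσw0 : σ = f u
      · -- the source of the image component is the contracted vertex; use u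
        refine ⟨u, ⟨huC, ?_⟩, ?_⟩
        · intro z hzC hzadj
          have hadj : Adj' (f z) (f u) := by
            rcases lift_proj hc h' hzadj with ⟨rfl, h2⟩ | ⟨_, h2⟩
            · exact absurd h2 (hne_uv hc)
            · exact h2
          refine hσsrc.2 (f z) ?_ (hσw0 ▸ hadj)
          rw [hcompB]; exact ⟨z, hzC, rfl⟩
        · have hlr := lift_reach hc h' hfibC huC hvC huC
          have hTRU : (Reach L C u ∪ {y | y ∈ Reach L C u ∧ v ∈ Reach L C u})
              = Reach L C u := by
            apply Set.Subset.antisymm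
            · rintro y (hy | ⟨hy, _⟩) <;> exact hy
            · exact fun y hy => Or.inl hy
          rw [hTRU] at hlr
          rw [hcompB, hσw0, hlr] at hσrem
          have hpre : C \ Reach L C u = f ⁻¹' (f '' C \ f '' Reach L C u) := by
            ext x
            constructor
            · rintro ⟨hxC, hxR⟩
              refine ⟨⟨x, hxC, rfl⟩, ?_⟩
              rintro ⟨x', hx'R, hfx'⟩
              rcases fiber_cases hc hfx' with rfl | ⟨rfl, rfl⟩ | ⟨rfl, rfl⟩
              · exact hxR hx'R
              · exact hxR hvRU
              · exact hxR (mem_reach_self _ _)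
            · rintro ⟨hx1, hx2⟩
              obtain ⟨x'', hx''C, hfx''⟩ := hx1
              refine ⟨hfibC x'' hx''C x hfx''.symm, ?_⟩
              exact fun hxR => hx2 ⟨x, hxR, rfl⟩
          have hw0out : f u ∉ f '' C \ f '' Reach L C u :=
            fun hh => hh.2 ⟨u, mem_reach_self _ _, rfl⟩
          have := iso_rev hc h' hw0out hσrem
          rw [← hpre] at this
          exact dtdLE_mono this (by omega)
      · -- lift the source
        have hσB : σ ∈ B := comp_subset hx0B hσsrc.1
        obtain ⟨t, hft⟩ := hc.2.2.1 σ
        have htu : t ≠ u := by rintro rfl; exact hσw0 hft.symm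
        have htv : t ≠ v := by
          rintro rfl
          apply hσw0
          rw [← hft, ← fuv hc]
        have htC : t ∈ C := by
          have hσfC : σ ∈ f '' C := by rw [← hcompB]; exact hσsrc.1
          obtain ⟨x'', hx''C, hfx''⟩ := hσfC
          exact hfibC x'' hx''C t (hft.trans hfx''.symm)
        have hsrcT : IsSource L C t := by
          refine ⟨htC, ?_⟩
          intro z hzC hzadj
          have hadj : Adj' (f z) (f t) := lift_nonfiber hc h' (Or.inr htv) hzadj
          refine hσsrc.2 (f z) ?_ (hft ▸ hadj)
          rw [hcompB]; exact ⟨z, hzC, rfl⟩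
        have hlr := lift_reach hc h' hfibC huC hvC htC
        rw [hcompB, ← hft, hlr] at hσrem
        set RU : Set V := Reach L C u with hRUdef
        set R0 : Set V := Reach L C t with hR0def
        set T : Set V := R0 ∪ {y | y ∈ RU ∧ v ∈ R0} with hTdef
        -- hσrem : dtdLE Adj' (f '' C \ f '' T) m
        by_cases hvR0 : v ∈ R0
        · by_cases huR0 : u ∈ R0
          · -- whole fiber reached: remainder is fiber-free, direct iso
            have hpre : C \ R0 = f ⁻¹' (f '' C \ f '' T) := by
              ext x
              constructor
              · rintro ⟨hxC, hxR⟩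
                refine ⟨⟨x, hxC, rfl⟩, ?_⟩
                rintro ⟨x', hx'T, hfx'⟩
                have hRUR0 : RU ⊆ R0 := reach_trans huR0
                have hx'R0 : x' ∈ R0 := by
                  rcases hx'T with h | ⟨h, _⟩
                  · exact h
                  · exact hRUR0 h
                rcases fiber_cases hc hfx' with rfl | ⟨rfl, rfl⟩ | ⟨rfl, rfl⟩
                · exact hxR hx'R0
                · exact hxR hvR0
                · exact hxR huR0
              · rintro ⟨hx1, hx2⟩
                obtain ⟨x'', hx''C, hfx''⟩ := hx1
                refine ⟨hfibC x'' hx''C x hfx''.symm, ?_⟩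
                exact fun hxR => hx2 ⟨x, Or.inl hxR, rfl⟩
            have hw0out : f u ∉ f '' C \ f '' T :=
              fun hh => hh.2 ⟨u, Or.inl huR0, rfl⟩
            have := iso_rev hc h' hw0out hσrem
            rw [← hpre] at this
            exact ⟨t, hsrcT, dtdLE_mono this (by omega)⟩
          · -- junk creation: recurse with the junk invariant
            set A1 : Set V := C \ R0 with hA1def
            set B1 : Set W := f '' C \ f '' T with hB1def
            have hR0C : R0 ⊆ C := reach_subset htC
            have hRUC : RU ⊆ C := reach_subset huC
            have hTC : T ⊆ C := by
              rintro y (hy | ⟨hy, _⟩)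
              · exact hR0C hy
              · exact hRUC hy
            have hfuT : u ∈ T := Or.inr ⟨mem_reach_self _ _, hvR0⟩
            have hfvT : v ∈ T := Or.inl hvR0
            have hw0B1 : f u ∉ B1 := fun hh => hh.2 ⟨u, hfuT, rfl⟩
            -- characterization of junk in A1
            have hjchar : ∀ j ∈ A1, f j ∉ B1 → j ∈ RU := by
              rintro j ⟨hjC, hjR0⟩ hjB1
              have hfjC : f j ∈ f '' C := ⟨j, hjC, rfl⟩
              have hfjT : f j ∈ f '' T := by
                by_contra hcon
                exact hjB1 ⟨hfjC, hcon⟩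
              obtain ⟨x', hx'T, hfx'⟩ := hfjT
              rcases fiber_cases hc hfx' with rfl | ⟨rfl, rfl⟩ | ⟨rfl, rfl⟩
              · rcases hx'T with h | ⟨h, _⟩
                · exact absurd h hjR0
                · exact h
              · exact absurd hvR0 hjR0
              · exact mem_reach_self _ _
            have hlive1 : ∀ x ∈ A1, f x ∉ f '' T → f x ∈ B1 := by
              intro x hxA1 hxT
              exact ⟨⟨x, hxA1.1, rfl⟩, hxT⟩
            have hinvNew : RInv H Adj' f u v B1 A1 := by
              refine ⟨?_, ?_, ?_, ?_, ?_⟩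
              · rintro x ⟨hx1, hx2⟩
                obtain ⟨x'', hx''C, hfx''⟩ := hx1
                refine ⟨hfibC x'' hx''C x hfx''.symm, ?_⟩
                exact fun hxR0 => hx2 ⟨x, Or.inl hxR0, rfl⟩
              · intro j hjA1 hjB1 y hyA1 hL
                have hjRU : j ∈ RU := hjchar j hjA1 hjB1
                have hyRU : y ∈ RU := reach_tail hjRU (hRUC hjRU) (hyA1.1 : y ∈ C) hL
                exact fun hyB1 => hyB1.2 ⟨y, Or.inr ⟨hyRU, hvR0⟩, rfl⟩
              · intro j hjA1 hjB1
                have hjRU : j ∈ RU := hjchar j hjA1 hjB1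
                have hRout : ∀ x ∈ R0, ∀ y ∈ C, L x y → y ∈ R0 :=
                  fun x hx y hy hL => reach_tail hx (hR0C hx) hy hL
                exact reach_diff hRout hjRU hjA1.2
              · intro hfu
                exact (hw0B1 hfu).elim
              · exact iff_of_false (fun hh => hh.2 hvR0) hw0B1
            have hclockNew : RClock H Adj' f u v B1 A1 m := by
              intro hjex
              by_cases hz : ∃ z ∈ A1, f z ∈ B1 ∧ L z u
              · obtain ⟨z, hzA1, hzB1, hzL⟩ := hz
                refine Or.inr ⟨z, hzA1, hzB1, hzL, ?_⟩
                exact dtdLE_compUnion hσrem (comp_subset hzB1)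
                  (fun b hb => by rw [comp_eq_of_mem hb])
              · push_neg at hz
                exact Or.inl fun z hzA1 hzB1 => hz z hzA1 hzB1
            have hres := IHn m (by omega) m (le_refl m) B1 A1 hσrem
              (fun _ => rfl) hinvNew hclockNew
            exact ⟨t, hsrcT, dtdLE_mono hres (by omega)⟩
        · -- v not reached: saturated remainder, recurse in the saturated state
          have huR0 : u ∉ R0 := fun hh =>
            hvR0 (reach_tail hh (reach_subset htC hh) hvC lift_uv)
          have hTeqR0 : T = R0 := by
            apply Set.Subset.antisymm
            · rintro y (hy | ⟨_, hy⟩)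
              · exact hy
              · exact absurd hy hvR0
            · exact fun y hy => Or.inl hy
          rw [hTeqR0] at hσrem
          set A1 : Set V := C \ R0 with hA1def
          set B1 : Set W := f '' C \ f '' R0 with hB1def
          have hR0C : R0 ⊆ C := reach_subset htC
          have hnofibR0 : ∀ x ∈ C \ R0, f x ∈ B1 := by
            rintro x ⟨hxC, hxR0⟩
            refine ⟨⟨x, hxC, rfl⟩, ?_⟩
            rintro ⟨x', hx'R0, hfx'⟩
            rcases fiber_cases hc hfx' with rfl | ⟨rfl, rfl⟩ | ⟨rfl, rfl⟩
            · exact hxR0 hx'R0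
            · exact huR0 hx'R0
            · exact absurd hx'R0 hvR0
          have hw0B1 : f u ∈ B1 := hnofibR0 u ⟨huC, huR0⟩
          have hinvNew : RInv H Adj' f u v B1 A1 := by
            refine ⟨?_, ?_, ?_, ?_, ?_⟩
            · rintro x ⟨hx1, hx2⟩
              obtain ⟨x'', hx''C, hfx''⟩ := hx1
              refine ⟨hfibC x'' hx''C x hfx''.symm, ?_⟩
              exact fun hxR0 => hx2 ⟨x, hxR0, rfl⟩
            · intro j hjA1 hjB1
              exact (hjB1 (hnofibR0 j hjA1)).elim
            · intro j hjA1 hjB1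
              exact (hjB1 (hnofibR0 j hjA1)).elim
            · exact fun _ x hx => hnofibR0 x hx
            · exact iff_of_true ⟨hvC, hvR0⟩ hw0B1
          have hclockNew : RClock H Adj' f u v B1 A1 m := by
            rintro ⟨j, hjA1, hjB1⟩
            exact (hjB1 (hnofibR0 j hjA1)).elim
          have hres := IHn m (by omega) m (le_refl m) B1 A1 hσrem
            (fun _ => rfl) hinvNew hclockNew
          exact ⟨t, hsrcT, dtdLE_mono hres (by omega)⟩
    · -- fiber-free component: direct isomorphism
      have huC : u ∉ C := fun hh => hvC (hCsat.mp hh)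
      have hw0nB0 : f u ∉ Comp Adj' B (f x0) := by
        rw [hcompB]
        rintro ⟨x', hx'C, hfx'⟩
        rcases fiber_of_eq_fu hc hfx' with rfl | rfl
        · exact huC hx'C
        · exact hvC hx'C
      have hpre : C = f ⁻¹' (Comp Adj' B (f x0)) := by
        rw [hcompB]
        apply Set.Subset.antisymm
        · exact fun y hy => ⟨y, hy, rfl⟩
        · rintro x ⟨x', hx'C, hfx'⟩
          rcases fiber_cases hc hfx' with rfl | ⟨rfl, rfl⟩ | ⟨rfl, rfl⟩
          · exact hx'C
          · exact absurd hx'C huC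
          · exact absurd hx'C hvC
      have hB0d : dtdLE Adj' (Comp Adj' B (f x0)) n :=
        dtdLE_compUnion hB (comp_subset hx0B) (fun b hb => by rw [comp_eq_of_mem hb])
      have hCd : dtdLE L C n := by
        have := iso_rev hc h' hw0nB0 hB0d
        rwa [← hpre] at this
      exact extract_step hx0 hCd (by omega)

  · -- S2 : contracted vertex already deleted on the `B` side
    have hvA : v ∉ A := fun hh => hw0B (hinv5.mp hh)
    by_cases hjunkC : ∃ j ∈ C, f j ∉ B
    · -- component containing junk (hence u)
      obtain ⟨j0, hj0C, hj0j⟩ := hjunkC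
      have hj0R : j0 ∈ Reach L A u := hinv3 j0 (hCA hj0C) hj0j
      have huA : u ∈ A := reach_mem_start hj0R (hCA hj0C)
      have huC : u ∈ C := by
        have h1 : j0 ∈ Comp L A u := reach_subset_comp hj0R
        have h2 : u ∈ Comp L A j0 := mem_comp_comm h1
        rw [hCdef, comp_eq_of_mem hj0C]
        exact h2
      have hRuA : Reach L C u = Reach L A u := by
        rw [hCdef, comp_eq_of_mem huC]
        exact reach_comp_eq huA
      have hureach_junk : ∀ y ∈ Reach L A u, f y ∉ B := by
        intro y hy
        induction hy with
        | refl => exact hw0B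
        | @tail p q hp hpq ih => exact hinv2 p hpq.1 ih q hpq.2.1 hpq.2.2
      rcases hclock ⟨j0, hCA hj0C, hj0j⟩ with hnonbr | ⟨z, hzA, hzB, hzu, hzclk⟩
      · -- no live in-neighbour of u: u is a source, all junk dies
        refine ⟨u, ⟨huC, ?_⟩, ?_⟩
        · intro z hzC hzadj
          by_cases hzB : f z ∈ B
          · exact hnonbr z (hCA hzC) hzB hzadj
          · have hzR : z ∈ Reach L A u := hinv3 z (hCA hzC) hzB
            have hrtg : Relation.ReflTransGen L u z :=
              Relation.ReflTransGen.mono (fun a b h => h.2.2) _ _ hzR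
            exact lift_acyclic hc h' u (Relation.TransGen.tail' hrtg hzadj)
        · set A1 : Set V := C \ Reach L C u with hA1def
          have hA1live : ∀ y, y ∈ A1 ↔ (y ∈ C ∧ f y ∈ B) := by
            intro y
            constructor
            · rintro ⟨hyC, hyR⟩
              refine ⟨hyC, ?_⟩
              by_contra hyB
              exact hyR (by rw [hRuA]; exact hinv3 y (hCA hyC) hyB)
            · rintro ⟨hyC, hyB⟩
              refine ⟨hyC, fun hyR => ?_⟩
              rw [hRuA] at hyR
              exact hureach_junk y hyR hyB
          set B0 : Set W := {b | ∃ y ∈ A1, b ∈ Comp Adj' B (f y)} with hB0def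
          have hB0B : B0 ⊆ B := by
            rintro b ⟨y, hyA1, hmem⟩
            exact comp_subset ((hA1live y).mp hyA1).2 hmem
          have hB0closed : ∀ b ∈ B0, Comp Adj' B b ⊆ B0 := by
            rintro b ⟨y, hyA1, hmem⟩ b' hb'
            exact ⟨y, hyA1, by rw [comp_eq_of_mem hmem]; exact hb'⟩
          have hdB0 : dtdLE Adj' B0 n := dtdLE_compUnion hB hB0B hB0closed
          have hw0B0 : f u ∉ B0 := fun hh => hw0B (hB0B hh)
          have hpre : A1 = f ⁻¹' B0 := by
            apply Set.Subset.antisymm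
            · intro y hy
              exact ⟨y, hy, mem_comp_self _ _⟩
            · rintro x ⟨y, hyA1, hmem⟩
              have hyC : y ∈ C := ((hA1live y).mp hyA1).1
              have hyB : f y ∈ B := ((hA1live y).mp hyA1).2
              have hxC : x ∈ C := by
                have h1 : x ∈ Comp L A y :=
                  nofib_comp_lift hc h' hw0B hinv1 (hCA hyC) hyB (f x) hmem x rfl
                rw [hCdef, comp_eq_of_mem hyC]
                exact h1
              exact (hA1live x).mpr ⟨hxC, comp_subset hyB hmem⟩
          have := iso_rev hc h' hw0B0 hdB0
          rw [← hpre] at this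
          exact dtdLE_mono this (by omega)
      · -- clock witness z; step with the source of z's component
        have hzC : z ∈ C := by
          have h1 : z ∈ Comp L A u :=
            Relation.ReflTransGen.tail (mem_comp_self _ _) (Or.inr ⟨hzA, huA, hzu⟩)
          rw [hCdef, comp_eq_of_mem huC]
          exact h1
        obtain ⟨k', σ, hkk, hσsrc, hσrem⟩ := dtdLE_inversion hzclk (mem_comp_self _ _)
        have hccz : Comp Adj' (Comp Adj' B (f z)) (f z) = Comp Adj' B (f z) :=
          comp_restrict (comp_subset hzB) (le_refl _)
        rw [hccz] at hσsrc hσrem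
        have hσB : σ ∈ B := comp_subset hzB hσsrc.1
        obtain ⟨t, hft⟩ := hc.2.2.1 σ
        have htu : t ≠ u := by rintro rfl; exact hw0B (hft.symm ▸ hσB)
        have htv : t ≠ v := by
          rintro rfl
          apply hw0B
          have : f u = σ := (fuv hc).trans hft
          exact this.symm ▸ hσB
        have htA : t ∈ A := hinv1 t (hft.symm ▸ hσB)
        have htC : t ∈ C := by
          have h1 : t ∈ Comp L A z :=
            nofib_comp_lift hc h' hw0B hinv1 hzA hzB σ hσsrc.1 t hft
          rw [hCdef, comp_eq_of_mem hzC]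
          exact h1
        have hsrcT : IsSource L C t := by
          refine ⟨htC, ?_⟩
          intro zz hzzC hzzadj
          by_cases hzzB : f zz ∈ B
          · have hadj : Adj' (f zz) σ :=
              hft ▸ lift_nonfiber hc h' (Or.inr htv) hzzadj
            have hzzCz : f zz ∈ Comp Adj' B (f z) := by
              have h1 : f zz ∈ Comp Adj' B σ :=
                Relation.ReflTransGen.tail (mem_comp_self _ _) (Or.inr ⟨hzzB, hσB, hadj⟩)
              rw [comp_eq_of_mem hσsrc.1]
              exact h1
            exact hσsrc.2 (f zz) hzzCz hadj
          · exact absurd (hft.symm ▸ hσB) (hinv2 zz (hCA hzzC) hzzB t htA hzzadj)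
        set Rt : Set V := Reach L C t with hRtdef
        have hRtC : Rt ⊆ C := reach_subset htC
        have hproj : ∀ y ∈ Rt, f y ∈ B → f y ∈ Reach Adj' (Comp Adj' B (f z)) σ := by
          intro y hy
          induction hy with
          | refl => intro _; rw [hft]; exact mem_reach_self _ _
          | @tail p q hp hpq ih =>
            intro hqB
            by_cases hpB : f p ∈ B
            · have ihp := ih hpB
              have hadj : Adj' (f p) (f q) := by
                rcases lift_proj hc h' hpq.2.2 with ⟨rfl, rfl⟩ | ⟨_, h2⟩
                · exact absurd hpB hw0B
                · exact h2
              have hpCz : f p ∈ Comp Adj' B (f z) := reach_subset hσsrc.1 ihp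
              have hqCz : f q ∈ Comp Adj' B (f z) := by
                have h1 : f q ∈ Comp Adj' B (f p) :=
                  Relation.ReflTransGen.tail (mem_comp_self _ _) (Or.inl ⟨hpB, hqB, hadj⟩)
                rw [comp_eq_of_mem hpCz]
                exact h1
              exact reach_tail ihp hpCz hqCz hadj
            · exact absurd hqB (hinv2 p (hCA hpq.1) hpB q (hCA hpq.2.1) hpq.2.2)
        have hliftR : ∀ b ∈ Reach Adj' (Comp Adj' B (f z)) σ, ∀ x, f x = b → x ∈ Rt := by
          intro b hb
          induction hb with
          | refl =>
            intro x hx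
            have : x = t := preimage_unique hc htu htv (hx.trans hft.symm)
            rw [this]; exact mem_reach_self _ _
          | @tail a c ha hac ih =>
            intro x hx
            have haB : a ∈ B := comp_subset hzB hac.1
            have hcB : c ∈ B := comp_subset hzB hac.2.1
            obtain ⟨x', y', hx', hy', hL⟩ := adj'_lift hc h' hac.2.2
            have hx'u : x' ≠ u := fun hh => hw0B ((hh ▸ hx' : f u = a) ▸ haB)
            have hx'v : x' ≠ v := by
              rintro rfl
              exact hw0B (((fuv hc).trans hx' : f u = a) ▸ haB)
            have hy'u : y' ≠ u := fun hh => hw0B ((hh ▸ hy' : f u = c) ▸ hcB)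
            have hy'v : y' ≠ v := by
              rintro rfl
              exact hw0B (((fuv hc).trans hy' : f u = c) ▸ hcB)
            have hx'Rt : x' ∈ Rt := ih x' hx'
            have hx'C : x' ∈ C := hRtC hx'Rt
            have hy'A : y' ∈ A := hinv1 y' (hy'.symm ▸ hcB)
            have hy'C : y' ∈ C := by
              have h1 : y' ∈ Comp L A x' :=
                Relation.ReflTransGen.tail (mem_comp_self _ _)
                  (Or.inl ⟨hCA hx'C, hy'A, hL⟩)
              rw [hCdef, comp_eq_of_mem hx'C]
              exact h1
            have hy'Rt : y' ∈ Rt := reach_tail hx'Rt hx'C hy'C hL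
            have : x = y' := preimage_unique hc hy'u hy'v (hx.trans hy'.symm)
            rw [this]; exact hy'Rt
        -- the two B-side pieces
        set X1 : Set W := Comp Adj' B (f z) \ Reach Adj' (Comp Adj' B (f z)) σ with hX1def
        set Y : Set W := {b | (∃ y ∈ C, f y ∈ B ∧ b ∈ Comp Adj' B (f y)) ∧
          b ∉ Comp Adj' B (f z)} with hYdef
        have hX1B : X1 ⊆ B := fun b hb => comp_subset hzB hb.1
        have hYB : Y ⊆ B := by
          rintro b ⟨⟨y, hyC, hyB, hmem⟩, _⟩
          exact comp_subset hyB hmem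
        have hB1B : X1 ∪ Y ⊆ B := by
          rintro b (hb | hb)
          · exact hX1B hb
          · exact hYB hb
        have hYclosed : ∀ b ∈ Y, Comp Adj' B b ⊆ Y := by
          rintro b ⟨⟨y, hyC, hyB, hmem⟩, hbn⟩ b' hb'
          refine ⟨⟨y, hyC, hyB, by rw [comp_eq_of_mem hmem]; exact hb'⟩, ?_⟩
          intro hb'Cz
          apply hbn
          have h1 : b ∈ Comp Adj' B b' := mem_comp_comm hb'
          rw [comp_eq_of_mem hb'Cz]
          exact h1
        have hdY : dtdLE Adj' Y n := dtdLE_compUnion hB hYB hYclosed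
        have hdX1 : dtdLE Adj' X1 n := dtdLE_mono hσrem (by omega)
        have hcross : ∀ a ∈ X1, ∀ b ∈ Y, ¬ Adj' a b ∧ ¬ Adj' b a := by
          intro a ha b hb
          constructor
          · intro hadj
            apply hb.2
            have h1 : b ∈ Comp Adj' B a :=
              Relation.ReflTransGen.tail (mem_comp_self _ _)
                (Or.inl ⟨hX1B ha, hYB hb, hadj⟩)
            rw [comp_eq_of_mem ha.1]
            exact h1
          · intro hadj
            apply hb.2
            have h1 : b ∈ Comp Adj' B a :=
              Relation.ReflTransGen.tail (mem_comp_self _ _)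
                (Or.inr ⟨hYB hb, hX1B ha, hadj⟩)
            rw [comp_eq_of_mem ha.1]
            exact h1
        have hdB1 : dtdLE Adj' (X1 ∪ Y) n := dtdLE_union hdX1 hdY hcross
        have hw0B1 : f u ∉ X1 ∪ Y := fun hh => hw0B (hB1B hh)
        -- every preimage of B1 lives in C \ Rt
        have hpre2 : ∀ x, f x ∈ X1 ∪ Y → x ∈ C \ Rt := by
          rintro x (⟨hx1, hx2⟩ | ⟨⟨y, hyC, hyB, hmem⟩, hxn⟩)
          · have hxC : x ∈ C := by
              have h1 : x ∈ Comp L A z :=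
                nofib_comp_lift hc h' hw0B hinv1 hzA hzB (f x) hx1 x rfl
              rw [hCdef, comp_eq_of_mem hzC]
              exact h1
            refine ⟨hxC, fun hxRt => hx2 (hproj x hxRt (comp_subset hzB hx1))⟩
          · have hxC : x ∈ C := by
              have h1 : x ∈ Comp L A y :=
                nofib_comp_lift hc h' hw0B hinv1 (hCA hyC) hyB (f x) hmem x rfl
              rw [hCdef, comp_eq_of_mem hyC]
              exact h1
            refine ⟨hxC, fun hxRt => ?_⟩
            have hxB : f x ∈ B := comp_subset hyB hmem
            exact hxn (reach_subset hσsrc.1 (hproj x hxRt hxB))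
        -- live elements of C \ Rt have image in B1
        have hlive2 : ∀ x, x ∈ C \ Rt → f x ∈ B → f x ∈ X1 ∪ Y := by
          rintro x ⟨hxC, hxRt⟩ hxB
          by_cases hxCz : f x ∈ Comp Adj' B (f z)
          · refine Or.inl ⟨hxCz, fun hxr => hxRt (hliftR (f x) hxr x rfl)⟩
          · exact Or.inr ⟨⟨x, hxC, hxB, mem_comp_self _ _⟩, hxCz⟩
        by_cases hdies : z = t ∨ z ∈ Rt
        · -- z dies with this step: all junk dies, remainder is a pure pullback
          have huRt : u ∈ Rt := by
            rcases hdies with rfl | hzRt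
            · exact reach_tail (mem_reach_self _ _) htC huC hzu
            · exact reach_tail hzRt (hRtC hzRt) huC hzu
          have hjdead : ∀ y, y ∈ C \ Rt → f y ∈ B := by
            rintro y ⟨hyC, hyRt⟩
            by_contra hyB
            have h1 : y ∈ Reach L A u := hinv3 y (hCA hyC) hyB
            rw [← hRuA] at h1
            exact hyRt (reach_trans huRt h1)
          have hpre : C \ Rt = f ⁻¹' (X1 ∪ Y) := by
            apply Set.Subset.antisymm
            · intro y hy
              exact hlive2 y hy (hjdead y hy)
            · intro x hx
              exact hpre2 x hx
          have := iso_rev hc h' hw0B1 hdB1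
          rw [← hpre] at this
          exact ⟨t, hsrcT, dtdLE_mono this (by omega)⟩
        · -- z survives: recurse on the clock
          push_neg at hdies
          obtain ⟨hzt, hzRt⟩ := hdies
          set A1 : Set V := C \ Rt with hA1def
          have hjchar : ∀ j ∈ A1, f j ∉ X1 ∪ Y → f j ∉ B := by
            intro j hjA1 hjB1 hjB
            exact hjB1 (hlive2 j hjA1 hjB)
          have hinvNew : RInv H Adj' f u v (X1 ∪ Y) A1 := by
            refine ⟨?_, ?_, ?_, ?_, ?_⟩
            · exact fun x hx => hpre2 x hx
            · intro j hjA1 hjB1 y hyA1 hL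
              have hjB : f j ∉ B := hjchar j hjA1 hjB1
              have hyB : f y ∉ B := hinv2 j (hCA hjA1.1) hjB y (hCA hyA1.1) hL
              exact fun hyB1 => hyB (hB1B hyB1)
            · intro j hjA1 hjB1
              have hjB : f j ∉ B := hjchar j hjA1 hjB1
              have hjRu : j ∈ Reach L C u := by
                rw [hRuA]; exact hinv3 j (hCA hjA1.1) hjB
              by_cases huRt : u ∈ Rt
              · exact absurd (reach_trans huRt (hRuA ▸ hinv3 j (hCA hjA1.1) hjB)) hjA1.2
              · have hRout : ∀ x ∈ Rt, ∀ y ∈ C, L x y → y ∈ Rt :=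
                  fun x hx y hy hL => reach_tail hx (hRtC hx) hy hL
                exact reach_diff hRout hjRu hjA1.2
            · intro hfu
              exact ((hw0B1 hfu).elim)
            · exact iff_of_false (fun hh => hvA (hCA hh.1)) hw0B1
          have hfzX1 : f z ∈ X1 :=
            ⟨mem_comp_self _ _, fun hxr => hzRt (hliftR (f z) hxr z rfl)⟩
          have hclockNew : RClock H Adj' f u v (X1 ∪ Y) A1 k' := by
            intro _
            refine Or.inr ⟨z, ⟨hzC, hzRt⟩, Or.inl hfzX1, hzu, ?_⟩
            have hcompz : Comp Adj' (X1 ∪ Y) (f z) = Comp Adj' X1 (f z) :=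
              (comp_restrict Set.subset_union_left (comp_union_subset hcross hfzX1)).symm
            rw [hcompz]
            exact dtdLE_compUnion hσrem (comp_subset hfzX1)
              (fun b hb => by rw [comp_eq_of_mem hb])
          have hres := IHk k' (by omega) (by omega) (X1 ∪ Y) A1 hdB1
            (fun hh => ((hw0B1 hh).elim)) hinvNew hclockNew
          exact ⟨t, hsrcT, dtdLE_mono hres (by omega)⟩
    · -- all-live component: direct isomorphism
      push_neg at hjunkC
      have hx0B : f x0 ∈ B := hjunkC x0 (mem_comp_self _ _)
      have hw0B0 : f u ∉ Comp Adj' B (f x0) := fun hh => hw0B (comp_subset hx0B hh)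
      have hpre : C = f ⁻¹' (Comp Adj' B (f x0)) := by
        apply Set.Subset.antisymm
        · intro y hy
          exact nofib_comp_proj hc h' hx0 (fun y' hy' => hjunkC y' hy') y hy
        · intro x hx
          exact nofib_comp_lift hc h' hw0B hinv1 hx0 hx0B (f x) hx x rfl
      have hB0d : dtdLE Adj' (Comp Adj' B (f x0)) n :=
        dtdLE_compUnion hB (comp_subset hx0B) (fun b hb => by rw [comp_eq_of_mem hb])
      have hCd : dtdLE L C n := by
        have := iso_rev hc h' hw0B0 hB0d
        rwa [← hpre] at this
      exact extract_step hx0 hCd (by omega)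


end Contraction5
/-- contracting one edge does not increase the (undirected) DAG treedepth:
every acyclic orientation of the contracted graph is dominated by some acyclic
orientation of the original graph. -/
theorem dtd_edge_contraction_le {V W : Type*} (H : SimpleGraph V) (H' : SimpleGraph W)
    (f : V → W) (u v : V) (hc : IsEdgeContraction H H' f u v)
    (Adj' : W → W → Prop) (h' : IsAcyclicOrientation H' Adj') :
    ∃ Adj : V → V → Prop, IsAcyclicOrientation H Adj ∧ dtd Adj' ≤ dtd Adj := by
  classical
  refine ⟨lift H Adj' f u v, lift_orientation hc h', ?_⟩
  by_cases hS' : {n | dtdLE Adj' Set.univ n}.Nonempty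
  · obtain ⟨n, hn⟩ := hS'
    have hrinv : RInv H Adj' f u v Set.univ Set.univ := by
      refine ⟨fun x _ => trivial, ?_, ?_, fun _ x _ => trivial, ?_⟩
      · intro j _ hj
        exact absurd trivial hj
      · intro j _ hj
        exact absurd trivial hj
      · exact iff_of_true trivial trivial
    have hrclock : RClock H Adj' f u v Set.univ Set.univ n := by
      rintro ⟨j, _, hj⟩
      exact absurd trivial hj
    have hSne : {m | dtdLE (lift H Adj' f u v) Set.univ m}.Nonempty :=
      ⟨n + n + 1, revc hc h' n n (le_refl n) Set.univ Set.univ hn (fun _ => rfl)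
        hrinv hrclock⟩
    have hsub : ∀ m ∈ {m | dtdLE (lift H Adj' f u v) Set.univ m},
        m ∈ {n | dtdLE Adj' Set.univ n} := by
      intro m hm
      have := sat_transfer hc h' hm (iff_of_true trivial trivial)
      rwa [Set.image_univ, Function.Surjective.range_eq hc.2.2.1] at this
    exact Nat.sInf_le (hsub _ (Nat.sInf_mem hSne))
  · rw [Set.not_nonempty_iff_eq_empty] at hS'
    show sInf _ ≤ sInf _
    rw [hS', Nat.sInf_empty]
    exact Nat.zero_le _

end DagPaper
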